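/- arXiv:2407.01916 — 4 statements merged into one kernel-verified Lean document; each statement's English description precedes it below -/
import Mathlib

section
/- Fix ρ ∈ (0,1), T ∈ ℕ, and a subset S of a finite universe. Consider a stream c_1,...,c_T where each c_t is sampled independently with probability ρ into a sample S'. Define Z_t = |S ∩ C'_t|/(ρT) − |S ∩ C_t|/T, where C_t = (c_1,...,c_t) and C'_t is the sampled subsequence. Then (Z_0, Z_1, ..., Z_T) is a martingale with Z_0 = 0, with increments bounded by 1/(ρT), and with conditional variance of Z_t given the past at most 1/(ρT²), even when c_t is chosen adaptively based on c_1,...,c_{t-1} and the sampling outcomes so far. -/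
open MeasureTheory Filter Set

/-!
Given `𝒢 t`, the sampling bit `ξ t` is Bernoulli(`ρ`) and `s t` is known, so
`E[s t * h (ξ t) | 𝒢 t] = s t * ((1 - ρ) * h 0 + ρ * h 1)` for every `h`. For the increment
`s t * (ξ t / ρ - 1) / T` this Bernoulli mean is `0`, and for its square (which is again of this
form, as `s t ^ 2 = s t`) it is `(1 - ρ) / (ρ T²)`. Since `ℱ (t - 1) ≤ 𝒢 t`, the tower property
transfers both facts to `ℱ (t - 1)`.
-/

section ZeroOne

variable {Ω : Type*} {m m₀ : MeasurableSpace Ω} {μ : Measure Ω} {ρ : ℝ} {s ξ : Ω → ℝ}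

lemma abs_le_one_of_eq_zero_or_eq_one {x : ℝ} (hx : x = 0 ∨ x = 1) : |x| ≤ 1 := by
  rcases hx with rfl | rfl <;> simp

lemma comp_eq_const_add_mul_of_eq_zero_or_eq_one (hξ01 : ∀ ω, ξ ω = 0 ∨ ξ ω = 1) (g : ℝ → ℝ) :
    (fun ω => g (ξ ω)) = fun ω => g 0 + (g 1 - g 0) * ξ ω :=
  funext fun ω => by rcases hξ01 ω with h | h <;> rw [h] <;> ring

variable [IsFiniteMeasure μ]

lemma integrable_of_eq_zero_or_eq_one (hξ : AEStronglyMeasurable ξ μ)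
    (hξ01 : ∀ ω, ξ ω = 0 ∨ ξ ω = 1) : Integrable ξ μ :=
  .of_bound hξ 1 (ae_of_all _ fun ω => abs_le_one_of_eq_zero_or_eq_one (hξ01 ω))

lemma integrable_comp_of_eq_zero_or_eq_one (hξ : Integrable ξ μ)
    (hξ01 : ∀ ω, ξ ω = 0 ∨ ξ ω = 1) (g : ℝ → ℝ) : Integrable (fun ω => g (ξ ω)) μ := by
  rw [comp_eq_const_add_mul_of_eq_zero_or_eq_one hξ01 g]
  exact (integrable_const _).add (hξ.const_mul _)

lemma integrable_mul_comp_of_eq_zero_or_eq_one (hs : AEStronglyMeasurable s μ) {C : ℝ}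
    (hsC : ∀ ω, |s ω| ≤ C) (hξ : Integrable ξ μ) (hξ01 : ∀ ω, ξ ω = 0 ∨ ξ ω = 1)
    (g : ℝ → ℝ) : Integrable (fun ω => s ω * g (ξ ω)) μ :=
  (integrable_comp_of_eq_zero_or_eq_one hξ hξ01 g).bdd_mul hs (ae_of_all _ hsC)

lemma condExp_comp_of_eq_zero_or_eq_one (hm : m ≤ m₀) (hξ : Integrable ξ μ)
    (hξ01 : ∀ ω, ξ ω = 0 ∨ ξ ω = 1) (hcond : μ[ξ|m] =ᵐ[μ] fun _ => ρ) (g : ℝ → ℝ) :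
    μ[fun ω => g (ξ ω)|m] =ᵐ[μ] fun _ => (1 - ρ) * g 0 + ρ * g 1 := by
  rw [comp_eq_const_add_mul_of_eq_zero_or_eq_one hξ01 g]
  filter_upwards [condExp_add (integrable_const (g 0)) (hξ.const_mul (g 1 - g 0)) m,
    condExp_smul (g 1 - g 0) ξ m, hcond] with ω hadd hsmul hρ
  change μ[(fun _ => g 0) + fun ω => (g 1 - g 0) * ξ ω|m] ω = _
  rw [hadd, Pi.add_apply, condExp_const hm]
  change g 0 + μ[(g 1 - g 0) • ξ|m] ω = _
  rw [hsmul, Pi.smul_apply, hρ, smul_eq_mul]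
  ring

lemma condExp_mul_comp_of_eq_zero_or_eq_one (hm : m ≤ m₀) (hs : StronglyMeasurable[m] s)
    {C : ℝ} (hsC : ∀ ω, |s ω| ≤ C) (hξ : Integrable ξ μ) (hξ01 : ∀ ω, ξ ω = 0 ∨ ξ ω = 1)
    (hcond : μ[ξ|m] =ᵐ[μ] fun _ => ρ) (g : ℝ → ℝ) :
    μ[fun ω => s ω * g (ξ ω)|m] =ᵐ[μ] fun ω => s ω * ((1 - ρ) * g 0 + ρ * g 1) := by
  filter_upwards [condExp_mul_of_stronglyMeasurable_left hs
      (integrable_mul_comp_of_eq_zero_or_eq_one (hs.mono hm).aestronglyMeasurable hsC hξ hξ01 g)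
      (integrable_comp_of_eq_zero_or_eq_one hξ hξ01 g),
    condExp_comp_of_eq_zero_or_eq_one hm hξ hξ01 hcond g] with ω hmul hcomp
  change μ[s * fun ω => g (ξ ω)|m] ω = _
  rw [hmul, Pi.mul_apply, hcomp]

end ZeroOne

section Tower

variable {Ω : Type*} {m' m m₀ : MeasurableSpace Ω} {μ : Measure Ω} [IsFiniteMeasure μ]
  {f : Ω → ℝ}

lemma condExp_ae_eq_zero_of_le (hm' : m' ≤ m) (hm : m ≤ m₀) (hf : μ[f|m] =ᵐ[μ] 0) :
    μ[f|m'] =ᵐ[μ] 0 := by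
  refine (condExp_condExp_of_le hm' hm).symm.trans ?_
  simpa only [condExp_zero] using condExp_congr_ae (m := m') hf

lemma condExp_ae_le_const_of_le (hm' : m' ≤ m) (hm : m ≤ m₀) {C : ℝ}
    (hf : μ[f|m] ≤ᵐ[μ] fun _ => C) : μ[f|m'] ≤ᵐ[μ] fun _ => C := by
  refine (condExp_condExp_of_le hm' hm).symm.le.trans ?_
  simpa only [condExp_const (hm'.trans hm)] using
    condExp_mono (m := m') integrable_condExp (integrable_const C) hf

end Tower

lemma martingale_sum_Icc_of_condExp_eq_zero {Ω : Type*} {m₀ : MeasurableSpace Ω}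
    {μ : Measure Ω} [IsFiniteMeasure μ] {ℱ : Filtration ℕ m₀} {D : ℕ → Ω → ℝ}
    (hD : ∀ t, 1 ≤ t → StronglyMeasurable[ℱ t] (D t)) (hDint : ∀ t, 1 ≤ t → Integrable (D t) μ)
    (hDcond : ∀ t, 1 ≤ t → μ[D t|ℱ (t - 1)] =ᵐ[μ] 0) :
    Martingale (fun t ω => ∑ u ∈ Finset.Icc 1 t, D u ω) ℱ μ := by
  refine martingale_of_condExp_sub_eq_zero_nat (fun t => ?_) (fun t => ?_) fun t => ?_
  · refine Finset.stronglyMeasurable_fun_sum _ fun u hu => ?_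
    obtain ⟨hu1, hut⟩ := Finset.mem_Icc.mp hu
    exact (hD u hu1).mono (ℱ.mono hut)
  · exact integrable_finsetSum _ fun u hu => hDint u (Finset.mem_Icc.mp hu).1
  · have hinc : (fun ω => ∑ u ∈ Finset.Icc 1 (t + 1), D u ω)
        - (fun ω => ∑ u ∈ Finset.Icc 1 t, D u ω) = D (t + 1) := by
      ext ω
      simp [Finset.sum_Icc_succ_top]
    simpa [hinc] using hDcond (t + 1) (by omega)

noncomputable def samplingIncrement (ρ T x : ℝ) : ℝ := (x / ρ - 1) / T

section SamplingIncrement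

variable {ρ : ℝ}

lemma samplingIncrement_mean (hρ : ρ ≠ 0) (T : ℝ) :
    (1 - ρ) * samplingIncrement ρ T 0 + ρ * samplingIncrement ρ T 1 = 0 := by
  unfold samplingIncrement
  field_simp
  ring

lemma samplingIncrement_sq_mean (hρ : ρ ≠ 0) (T : ℝ) :
    (1 - ρ) * samplingIncrement ρ T 0 ^ 2 + ρ * samplingIncrement ρ T 1 ^ 2
      = (1 - ρ) / (ρ * T ^ 2) := by
  unfold samplingIncrement
  field_simp
  ring

lemma measurable_samplingIncrement (ρ T : ℝ) : Measurable (samplingIncrement ρ T) := by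
  unfold samplingIncrement
  fun_prop

lemma abs_samplingIncrement_le (hρ : ρ ∈ Ioc 0 1) {T : ℝ} (hT : 0 ≤ T) {x : ℝ}
    (hx : x = 0 ∨ x = 1) : |samplingIncrement ρ T x| ≤ 1 / (ρ * T) := by
  obtain ⟨hρ0, hρ1⟩ := hρ
  have hx' : |x / ρ - 1| ≤ 1 / ρ := by
    have : 1 ≤ 1 / ρ := by rw [le_div_iff₀ hρ0]; linarith
    rcases hx with rfl | rfl
    · rwa [zero_div, zero_sub, abs_neg, abs_one]
    · rw [abs_le]; constructor <;> linarith
  rw [samplingIncrement, abs_div, abs_of_nonneg hT, ← div_div]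
  exact div_le_div_of_nonneg_right hx' hT

end SamplingIncrement

/-- `s t` indicates that the `t`-th stream element lies in `S` and `ξ t` that it is retained;
`𝒢 t` is the information available just before the `t`-th sampling decision, on which the choice
of the `t`-th element may depend. -/
structure IsAdaptiveBernoulliSampling {Ω : Type*} {m₀ : MeasurableSpace Ω} (μ : Measure Ω)
    (ℱ : Filtration ℕ m₀) (𝒢 : ℕ → MeasurableSpace Ω) (ρ : ℝ) (s ξ : ℕ → Ω → ℝ) : Prop where
  pred_le : ∀ t, 1 ≤ t → ℱ (t - 1) ≤ 𝒢 t
  le_filtration : ∀ t, 1 ≤ t → 𝒢 t ≤ ℱ t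
  s_eq_zero_or_eq_one : ∀ t ω, s t ω = 0 ∨ s t ω = 1
  ξ_eq_zero_or_eq_one : ∀ t ω, ξ t ω = 0 ∨ ξ t ω = 1
  measurable_s : ∀ t, 1 ≤ t → Measurable[𝒢 t] (s t)
  measurable_ξ : ∀ t, 1 ≤ t → Measurable[ℱ t] (ξ t)
  condExp_ξ : ∀ t, 1 ≤ t → μ[ξ t | 𝒢 t] =ᵐ[μ] fun _ => ρ

namespace IsAdaptiveBernoulliSampling

variable {Ω : Type*} {m₀ : MeasurableSpace Ω} {μ : Measure Ω}
  {ℱ : Filtration ℕ m₀} {𝒢 : ℕ → MeasurableSpace Ω} {ρ : ℝ} {s ξ : ℕ → Ω → ℝ} {t : ℕ}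

lemma le_ambient (h : IsAdaptiveBernoulliSampling μ ℱ 𝒢 ρ s ξ) (ht : 1 ≤ t) : 𝒢 t ≤ m₀ :=
  (h.le_filtration t ht).trans (ℱ.le t)

variable [IsFiniteMeasure μ]

lemma integrable_ξ (h : IsAdaptiveBernoulliSampling μ ℱ 𝒢 ρ s ξ) (ht : 1 ≤ t) :
    Integrable (ξ t) μ :=
  integrable_of_eq_zero_or_eq_one ((h.measurable_ξ t ht).mono (ℱ.le t) le_rfl).aestronglyMeasurable
    (h.ξ_eq_zero_or_eq_one t)

lemma integrable_mul_comp (h : IsAdaptiveBernoulliSampling μ ℱ 𝒢 ρ s ξ) (ht : 1 ≤ t)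
    (g : ℝ → ℝ) : Integrable (fun ω => s t ω * g (ξ t ω)) μ :=
  integrable_mul_comp_of_eq_zero_or_eq_one
    ((h.measurable_s t ht).mono (h.le_ambient ht) le_rfl).aestronglyMeasurable
    (fun ω => abs_le_one_of_eq_zero_or_eq_one (h.s_eq_zero_or_eq_one t ω))
    (h.integrable_ξ ht) (h.ξ_eq_zero_or_eq_one t) g

lemma condExp_mul_comp (h : IsAdaptiveBernoulliSampling μ ℱ 𝒢 ρ s ξ) (ht : 1 ≤ t)
    (g : ℝ → ℝ) :
    μ[fun ω => s t ω * g (ξ t ω)|𝒢 t] =ᵐ[μ] fun ω => s t ω * ((1 - ρ) * g 0 + ρ * g 1) :=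
  condExp_mul_comp_of_eq_zero_or_eq_one (h.le_ambient ht) (h.measurable_s t ht).stronglyMeasurable
    (fun ω => abs_le_one_of_eq_zero_or_eq_one (h.s_eq_zero_or_eq_one t ω))
    (h.integrable_ξ ht) (h.ξ_eq_zero_or_eq_one t) (h.condExp_ξ t ht) g

lemma martingale_sum_mul_comp (h : IsAdaptiveBernoulliSampling μ ℱ 𝒢 ρ s ξ) {g : ℝ → ℝ}
    (hg : Measurable g) (hg_mean : (1 - ρ) * g 0 + ρ * g 1 = 0) :
    Martingale (fun t ω => ∑ u ∈ Finset.Icc 1 t, s u ω * g (ξ u ω)) ℱ μ := by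
  refine martingale_sum_Icc_of_condExp_eq_zero (fun t ht => ?_)
    (fun t ht => h.integrable_mul_comp ht g)
    fun t ht => condExp_ae_eq_zero_of_le (h.pred_le t ht) (h.le_ambient ht) ?_
  · exact (((h.measurable_s t ht).mono (h.le_filtration t ht) le_rfl).mul
      (hg.comp (h.measurable_ξ t ht))).stronglyMeasurable
  · filter_upwards [h.condExp_mul_comp ht g] with ω hω
    rw [hω, hg_mean, mul_zero, Pi.zero_apply]

lemma condExp_sq_mul_comp_le (h : IsAdaptiveBernoulliSampling μ ℱ 𝒢 ρ s ξ) (hρ : ρ ∈ Icc 0 1)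
    (ht : 1 ≤ t) (g : ℝ → ℝ) :
    ∀ᵐ ω ∂μ, μ[fun ω => (s t ω * g (ξ t ω)) ^ 2|ℱ (t - 1)] ω ≤ (1 - ρ) * g 0 ^ 2 + ρ * g 1 ^ 2 := by
  have hsq : (fun ω => (s t ω * g (ξ t ω)) ^ 2) = fun ω => s t ω * g (ξ t ω) ^ 2 := by
    ext ω
    rcases h.s_eq_zero_or_eq_one t ω with hs | hs <;> simp [hs]
  have hnonneg : 0 ≤ (1 - ρ) * g 0 ^ 2 + ρ * g 1 ^ 2 :=
    add_nonneg (mul_nonneg (sub_nonneg.2 hρ.2) (sq_nonneg _)) (mul_nonneg hρ.1 (sq_nonneg _))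
  rw [hsq]
  refine condExp_ae_le_const_of_le (h.pred_le t ht) (h.le_ambient ht) ?_
  filter_upwards [h.condExp_mul_comp ht (g · ^ 2)] with ω hω
  rw [hω]
  rcases h.s_eq_zero_or_eq_one t ω with hs | hs <;> simp only [hs, zero_mul, one_mul, le_refl]
  exact hnonneg

end IsAdaptiveBernoulliSampling

theorem bernoulli_sampling_martingale_general
    {Ω : Type*} {m0 : MeasurableSpace Ω} (μ : Measure Ω) [IsProbabilityMeasure μ]
    (ℱ : Filtration ℕ m0) (𝒢 : ℕ → MeasurableSpace Ω)
    (ρ : ℝ) (hρ : ρ ∈ Set.Ioo (0:ℝ) 1) (T : ℕ)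
    (s ξ : ℕ → Ω → ℝ)
    (horder : ∀ t, 1 ≤ t → ℱ (t - 1) ≤ 𝒢 t ∧ 𝒢 t ≤ ℱ t)
    (hsval : ∀ t ω, s t ω = 0 ∨ s t ω = 1)
    (hξval : ∀ t ω, ξ t ω = 0 ∨ ξ t ω = 1)
    (hsmeas : ∀ t, 1 ≤ t → Measurable[𝒢 t] (s t))
    (hξmeas : ∀ t, 1 ≤ t → Measurable[ℱ t] (ξ t))
    (hcond : ∀ t, 1 ≤ t → μ[ξ t | 𝒢 t] =ᵐ[μ] fun _ => ρ)
    (Z : ℕ → Ω → ℝ)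
    (hZ : ∀ t ω, Z t ω = (∑ u ∈ Finset.Icc 1 t, s u ω * (ξ u ω / ρ - 1)) / T) :
    Martingale Z ℱ μ ∧ (∀ ω, Z 0 ω = 0) ∧
      (∀ t, 1 ≤ t → ∀ᵐ ω ∂μ, |Z t ω - Z (t - 1) ω| ≤ 1 / (ρ * T)) ∧
      (∀ t, 1 ≤ t →
        ∀ᵐ ω ∂μ,
          (μ[fun ω => (Z t ω - Z (t - 1) ω) ^ 2 | ℱ (t - 1)]) ω ≤ 1 / (ρ * T ^ 2)) := by
  have hS : IsAdaptiveBernoulliSampling μ ℱ 𝒢 ρ s ξ :=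
    ⟨fun t ht => (horder t ht).1, fun t ht => (horder t ht).2, hsval, hξval, hsmeas, hξmeas, hcond⟩
  set g := samplingIncrement ρ T
  have hZg : Z = fun t ω => ∑ u ∈ Finset.Icc 1 t, s u ω * g (ξ u ω) := by
    ext t ω
    simp only [hZ, Finset.sum_div, mul_div_assoc, g, samplingIncrement]
  have hinc : ∀ t, 1 ≤ t → ∀ ω, Z t ω - Z (t - 1) ω = s t ω * g (ξ t ω) := by
    intro t ht ω
    obtain ⟨n, rfl⟩ := Nat.exists_eq_add_of_le' ht
    simp [hZg, Finset.sum_Icc_succ_top]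
  refine ⟨hZg ▸ hS.martingale_sum_mul_comp (measurable_samplingIncrement ρ T)
      (samplingIncrement_mean hρ.1.ne' T), fun ω => by simp [hZ],
    fun t ht => ae_of_all _ fun ω => ?_, fun t ht => ?_⟩
  · rw [hinc t ht, abs_mul]
    exact mul_le_of_le_one_left (abs_nonneg _) (abs_le_one_of_eq_zero_or_eq_one (hsval t ω))
      |>.trans (abs_samplingIncrement_le (Ioo_subset_Ioc_self hρ) (Nat.cast_nonneg T) (hξval t ω))
  · simp_rw [hinc t ht]
    filter_upwards [hS.condExp_sq_mul_comp_le (Ioo_subset_Icc_self hρ) ht g] with ω hω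
    rw [samplingIncrement_sq_mean hρ.1.ne'] at hω
    exact hω.trans (div_le_div_of_nonneg_right (by linarith [hρ.1])
      (mul_nonneg hρ.1.le (sq_nonneg _)))

/-- The Bernoulli-sampling residual process `Z_t = |S∩C'_t|/(ρT) − |S∩C_t|/T`
of a (possibly adaptive) stream is a martingale starting at `0`, with increments
bounded by `1/(ρT)` and conditional variance at most `1/(ρT²)`. Here `s t` is the
indicator that the `t`-th stream element belongs to the set `S` and `ξ t` is the
indicator that it is retained by the sampler; `𝒢 t` is the information available
just before the `t`-th sampling decision. -/
theorem bernoulli_sampling_martingale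
    {Ω : Type*} {m0 : MeasurableSpace Ω} (μ : Measure Ω) [IsProbabilityMeasure μ]
    (ℱ : Filtration ℕ m0) (𝒢 : ℕ → MeasurableSpace Ω)
    (ρ : ℝ) (hρ : ρ ∈ Set.Ioo (0:ℝ) 1) (T : ℕ) (hT : 0 < T)
    (s ξ : ℕ → Ω → ℝ)
    (horder : ∀ t, 1 ≤ t → ℱ (t - 1) ≤ 𝒢 t ∧ 𝒢 t ≤ ℱ t)
    (hsval : ∀ t ω, s t ω = 0 ∨ s t ω = 1)
    (hξval : ∀ t ω, ξ t ω = 0 ∨ ξ t ω = 1)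
    (hsmeas : ∀ t, 1 ≤ t → Measurable[𝒢 t] (s t))
    (hξmeas : ∀ t, 1 ≤ t → Measurable[ℱ t] (ξ t))
    (hcond : ∀ t, 1 ≤ t → μ[ξ t | 𝒢 t] =ᵐ[μ] fun _ => ρ)
    (Z : ℕ → Ω → ℝ)
    (hZ : ∀ t ω, Z t ω = (∑ u ∈ Finset.Icc 1 t, s u ω * (ξ u ω / ρ - 1)) / T) :
    Martingale Z ℱ μ ∧ (∀ ω, Z 0 ω = 0) ∧
      (∀ t, 1 ≤ t → ∀ᵐ ω ∂μ, |Z t ω - Z (t - 1) ω| ≤ 1 / (ρ * T)) ∧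
      (∀ t, 1 ≤ t →
        ∀ᵐ ω ∂μ,
          (μ[fun ω => (Z t ω - Z (t - 1) ω) ^ 2 | ℱ (t - 1)]) ω ≤ 1 / (ρ * T ^ 2)) :=
  bernoulli_sampling_martingale_general μ ℱ 𝒢 ρ hρ T s ξ horder hsval hξval hsmeas hξmeas hcond Z hZ
end

section
/- Under the setup of Bernoulli sampling of a (possibly adaptive) stream of length T with retention probability ρ, if ρ ≥ 10·ln(4/δ)/(ε²T), then with probability at least 1 − δ the density of any fixed set S in the sampled subsequence differs from its density in the full stream by at most ε, i.e., P(|d_S(C) − d_S(C')| ≥ ε) ≤ δ, where d_S(C) denotes the fraction of elements of sequence C that belong to S. -/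
/-!
The retained count `∑ ξ t` and the retained count of `S`, `∑ s t * ξ t`, are both sums of
adaptively chosen `{0,1}`-increments `c t * ξ t` with conditional mean `ρ * c t` given the past.
Since `exp (θ x) = 1 + (exp θ - 1) x` on `{0,1}` and `1 + x ≤ exp x`, the process
`exp (θ ∑ c t ξ t - ρ (exp θ - 1) ∑ c t)` is a nonnegative supermartingale, so Markov's inequality
gives Chernoff bounds with exponent `9 ε² ρ T / 88 ≥ log (4 / δ)`. Off the four deviation events,
both counts are within `ε ρ T / 2` of `ρ T` and `ρ ∑ s t` respectively, which forces the two
densities to be `ε`-close.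
-/

open MeasureTheory Set
open scoped Finset

theorem exp_sub_one_sub_le_of_abs_le_half {x : ℝ} (hx : |x| ≤ 1 / 2) :
    Real.exp x - 1 - x ≤ 11 / 18 * x ^ 2 := by
  have htaylor := Real.exp_bound (x := x) (by linarith) (n := 3) (by norm_num)
  norm_num [Finset.sum_range_succ, Nat.factorial] at htaylor
  have hcube : |x| ^ 3 ≤ 1 / 2 * x ^ 2 := by
    rw [pow_succ, sq_abs, mul_comm]
    exact mul_le_mul_of_nonneg_right hx (sq_nonneg x)
  linarith [(abs_le.1 htaylor).2]

theorem le_chernoff_exponent {ρ T ε θ X K : ℝ} (hρ : 0 ≤ ρ) (hε1 : ε ≤ 1)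
    (hK0 : 0 ≤ K) (hKT : K ≤ T) (hθ : |θ| = 9 / 22 * ε)
    (hdev : |θ| * (ε / 2 * (ρ * T)) ≤ θ * (X - ρ * K)) :
    9 / 88 * ε ^ 2 * (ρ * T) ≤ θ * X - ρ * (Real.exp θ - 1) * K := by
  have hε0 : 0 ≤ ε := by linarith [abs_nonneg θ]
  have hquad : Real.exp θ - 1 - θ ≤ 11 / 18 * θ ^ 2 :=
    exp_sub_one_sub_le_of_abs_le_half (by linarith)
  have hconvex : 0 ≤ Real.exp θ - 1 - θ := by linarith [Real.add_one_le_exp θ]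
  have hloss : ρ * K * (Real.exp θ - 1 - θ) ≤ ρ * T * (11 / 18 * θ ^ 2) :=
    mul_le_mul (by nlinarith) hquad hconvex (by nlinarith [sq_nonneg θ])
  rw [← sq_abs, hθ] at hloss
  rw [hθ] at hdev
  nlinarith

theorem four_mul_exp_neg_le_of_log_div_le {ρ δ ε : ℝ} {T : ℕ} (hT : 0 < T)
    (hδ0 : 0 < δ) (hδ1 : δ < 1) (hε : 0 < ε)
    (hρbound : 10 * Real.log (4 / δ) / (ε ^ 2 * T) ≤ ρ) :
    4 * Real.exp (-(9 / 88 * ε ^ 2 * (ρ * T))) ≤ δ := by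
  have hlog : Real.log (4 / δ) ≤ 9 / 88 * ε ^ 2 * (ρ * T) := by
    have : 0 < Real.log (4 / δ) := Real.log_pos (by rw [lt_div_iff₀ hδ0]; linarith)
    rw [div_le_iff₀ (by positivity)] at hρbound
    linarith
  have hexp := Real.exp_le_exp.2 (neg_le_neg hlog)
  rw [Real.exp_neg (Real.log _), Real.exp_log (by positivity), inv_div] at hexp
  linarith

theorem abs_div_sub_div_lt_of_abs_sub_lt {ρ T ε N n nS : ℝ} (hρ : 0 < ρ) (hT : 0 < T)
    (hε1 : ε < 1) (hNT : N ≤ T) (hnS0 : 0 ≤ nS) (hnSN : nS ≤ N) (hnSn : nS ≤ n)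
    (hn : |n - ρ * T| < ε / 2 * (ρ * T)) (hnS : |nS - ρ * N| < ε / 2 * (ρ * T)) :
    |N / T - nS / n| < ε := by
  obtain ⟨hn₁, hn₂⟩ := abs_lt.1 hn
  obtain ⟨hnS₁, hnS₂⟩ := abs_lt.1 hnS
  have hTN : 0 ≤ T - N := sub_nonneg.2 hNT
  have hN0 : 0 ≤ N := hnS0.trans hnSN
  have hn0 : 0 < n := by nlinarith [mul_pos hρ hT]
  have hTn : 0 < T * n := mul_pos hT hn0
  rw [div_sub_div _ _ hT.ne' hn0.ne', abs_div, abs_of_pos hTn, div_lt_iff₀ hTn, abs_lt]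
  constructor
  · rcases le_or_gt (ρ * T) n with hc | hc
    · nlinarith [mul_nonneg hN0 (sub_nonneg.2 hc)]
    · rcases le_or_gt (ε * T) (T - N) with hd | hd
      · nlinarith [mul_le_mul_of_nonneg_right hd (sub_pos.2 hc).le,
          mul_nonneg hTN (sub_pos.2 hc).le]
      · nlinarith [mul_nonneg hT.le (sub_nonneg.2 hnSn), mul_lt_mul_of_pos_right hd hn0]
  · rcases le_or_gt n (ρ * T) with hc | hc
    · nlinarith [mul_nonneg hN0 (sub_nonneg.2 hc)]
    · nlinarith [mul_nonneg hTN (sub_pos.2 hc).le]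

theorem abs_sum_div_card_sub_sum_mul_div_sum_lt {ι : Type*} (I : Finset ι) {s ξ : ι → ℝ}
    {ρ ε : ℝ} (hs : ∀ i, s i = 0 ∨ s i = 1) (hξ : ∀ i, ξ i = 0 ∨ ξ i = 1) (hρ : 0 < ρ)
    (hI : I.Nonempty) (hε1 : ε < 1)
    (hn : |∑ i ∈ I, ξ i - ρ * #I| < ε / 2 * (ρ * #I))
    (hnS : |∑ i ∈ I, s i * ξ i - ρ * ∑ i ∈ I, s i| < ε / 2 * (ρ * #I)) :
    |(∑ i ∈ I, s i) / #I - (∑ i ∈ I, s i * ξ i) / ∑ i ∈ I, ξ i| < ε := by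
  have hterm : ∀ i, s i ≤ 1 ∧ 0 ≤ s i * ξ i ∧ s i * ξ i ≤ s i ∧ s i * ξ i ≤ ξ i := by
    intro i
    rcases hs i with h | h <;> rcases hξ i with h' | h' <;> norm_num [h, h']
  refine abs_div_sub_div_lt_of_abs_sub_lt hρ (by exact_mod_cast hI.card_pos) hε1 ?_
    (Finset.sum_nonneg fun i _ => (hterm i).2.1) (Finset.sum_le_sum fun i _ => (hterm i).2.2.1)
    (Finset.sum_le_sum fun i _ => (hterm i).2.2.2) hn hnS
  simpa using Finset.sum_le_sum fun i (_ : i ∈ I) => (hterm i).1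

section AdaptiveBernoulli

variable {Ω : Type*} {m m0 : MeasurableSpace Ω} {μ : Measure Ω}

theorem integral_mul_eq_mul_integral_of_condExp_eq_const {f g : Ω → ℝ} {ρ : ℝ} (hm : m ≤ m0)
    [SigmaFinite (μ.trim hm)] (hf : StronglyMeasurable[m] f) (hfg : Integrable (f * g) μ)
    (hg : Integrable g μ)
    (hcond : μ[g | m] =ᵐ[μ] fun _ => ρ) :
    ∫ ω, f ω * g ω ∂μ = ρ * ∫ ω, f ω ∂μ :=
  calc ∫ ω, f ω * g ω ∂μ = ∫ ω, μ[f * g | m] ω ∂μ := (integral_condExp hm).symm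
    _ = ∫ ω, f ω * ρ ∂μ := integral_congr_ae <|
        (condExp_mul_of_stronglyMeasurable_left hf hfg hg).trans <|
          hcond.mono fun ω hω => by simp only [Pi.mul_apply, hω]
    _ = ρ * ∫ ω, f ω ∂μ := by rw [integral_mul_const, mul_comm]

theorem norm_le_one_of_eq_zero_or_eq_one {x : ℝ} (hx : x = 0 ∨ x = 1) : ‖x‖ ≤ 1 := by
  rcases hx with rfl | rfl <;> norm_num

theorem integrable_mul_exp_and_integral_le_of_condExp_eq_const [IsFiniteMeasure μ]
    {h c ξ : Ω → ℝ} {ρ : ℝ} (θ : ℝ) (hm : m ≤ m0)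
    (hh : Measurable[m] h) (hh0 : 0 ≤ h) (hhi : Integrable h μ)
    (hc : Measurable[m] c) (hc01 : ∀ ω, c ω = 0 ∨ c ω = 1)
    (hξ : Measurable ξ) (hξ01 : ∀ ω, ξ ω = 0 ∨ ξ ω = 1)
    (hcond : μ[ξ | m] =ᵐ[μ] fun _ => ρ) :
    Integrable (fun ω => h ω * Real.exp (θ * (c ω * ξ ω) - ρ * (Real.exp θ - 1) * c ω)) μ ∧
      ∫ ω, h ω * Real.exp (θ * (c ω * ξ ω) - ρ * (Real.exp θ - 1) * c ω) ∂μ ≤ ∫ ω, h ω ∂μ := by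
  set r := Real.exp θ - 1
  set u : Ω → ℝ := fun ω => h ω * Real.exp (-(ρ * r * c ω))
  have hcomp : Measurable[m] fun ω => Real.exp (-(ρ * r * c ω)) := (hc.const_mul _).neg.exp
  have hu : Measurable[m] u := hh.mul hcomp
  have hui : Integrable u μ := by
    refine hhi.mul_bdd (hcomp.mono hm le_rfl).aestronglyMeasurable (c := Real.exp |ρ * r|)
      (ae_of_all _ fun ω => ?_)
    rw [Real.norm_eq_abs, Real.abs_exp, Real.exp_le_exp]
    rcases hc01 ω with hc0 | hc1
    · simpa [hc0] using abs_nonneg (ρ * r)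
    · simpa [hc1] using neg_le_abs (ρ * r)
  have huci : Integrable (u * c) μ :=
    hui.mul_bdd (hc.mono hm le_rfl).aestronglyMeasurable
      (ae_of_all _ fun ω => norm_le_one_of_eq_zero_or_eq_one (hc01 ω))
  have hξi : Integrable ξ μ :=
    Integrable.of_bound hξ.aestronglyMeasurable 1
      (ae_of_all _ fun ω => norm_le_one_of_eq_zero_or_eq_one (hξ01 ω))
  have hucξi : Integrable (u * c * ξ) μ :=
    huci.mul_bdd hξ.aestronglyMeasurable
      (ae_of_all _ fun ω => norm_le_one_of_eq_zero_or_eq_one (hξ01 ω))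
  have hlin : ∀ ω, Real.exp (θ * (c ω * ξ ω)) = 1 + r * (c ω * ξ ω) := fun ω => by
    rcases hc01 ω with hc' | hc' <;> rcases hξ01 ω with hξ' | hξ' <;> simp [hc', hξ', r]
  have hsplit : (fun ω => h ω * Real.exp (θ * (c ω * ξ ω) - ρ * r * c ω)) =
      fun ω => u ω + r * (u * c * ξ) ω := by
    ext ω
    rw [sub_eq_add_neg, Real.exp_add, hlin]
    simp only [u, Pi.mul_apply]
    ring
  have hpull : ∫ ω, (u * c * ξ) ω ∂μ = ρ * ∫ ω, (u * c) ω ∂μ :=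
    integral_mul_eq_mul_integral_of_condExp_eq_const hm (hu.mul hc).stronglyMeasurable
      hucξi hξi hcond
  refine ⟨hsplit ▸ hui.add (hucξi.const_mul r), ?_⟩
  calc ∫ ω, h ω * Real.exp (θ * (c ω * ξ ω) - ρ * r * c ω) ∂μ
      = ∫ ω, u ω + ρ * r * (u * c) ω ∂μ := by
        rw [hsplit, integral_add hui (hucξi.const_mul r), integral_const_mul, hpull,
          integral_add hui (huci.const_mul _), integral_const_mul]
        ring
    _ ≤ ∫ ω, h ω ∂μ := by
        refine integral_mono (hui.add (huci.const_mul _)) hhi fun ω => ?_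
        have hexp : 1 + ρ * r * c ω ≤ Real.exp (ρ * r * c ω) := by
          linarith [Real.add_one_le_exp (ρ * r * c ω)]
        calc u ω + ρ * r * (u * c) ω = h ω * Real.exp (-(ρ * r * c ω)) * (1 + ρ * r * c ω) := by
              simp only [u, Pi.mul_apply]; ring
          _ ≤ h ω * Real.exp (-(ρ * r * c ω)) * Real.exp (ρ * r * c ω) :=
              mul_le_mul_of_nonneg_left hexp (mul_nonneg (hh0 ω) (Real.exp_nonneg _))
          _ = h ω := by rw [mul_assoc, ← Real.exp_add, neg_add_cancel, Real.exp_zero, mul_one]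

theorem integrable_exp_sum_and_integral_le_one [IsProbabilityMeasure μ]
    (ℱ : Filtration ℕ m0) (𝒢 : ℕ → MeasurableSpace Ω) {ρ : ℝ} {ξ c : ℕ → Ω → ℝ}
    (horder : ∀ t, 1 ≤ t → ℱ (t - 1) ≤ 𝒢 t ∧ 𝒢 t ≤ ℱ t)
    (hξval : ∀ t ω, ξ t ω = 0 ∨ ξ t ω = 1) (hcval : ∀ t ω, c t ω = 0 ∨ c t ω = 1)
    (hcmeas : ∀ t, 1 ≤ t → Measurable[𝒢 t] (c t))
    (hξmeas : ∀ t, 1 ≤ t → Measurable[ℱ t] (ξ t))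
    (hcond : ∀ t, 1 ≤ t → μ[ξ t | 𝒢 t] =ᵐ[μ] fun _ => ρ) (θ : ℝ) (k : ℕ) :
    Integrable (fun ω => Real.exp (∑ t ∈ Finset.Icc 1 k,
        (θ * (c t ω * ξ t ω) - ρ * (Real.exp θ - 1) * c t ω))) μ ∧
      ∫ ω, Real.exp (∑ t ∈ Finset.Icc 1 k,
        (θ * (c t ω * ξ t ω) - ρ * (Real.exp θ - 1) * c t ω)) ∂μ ≤ 1 := by
  have hmeas : ∀ k, Measurable[ℱ k] fun ω => Real.exp (∑ t ∈ Finset.Icc 1 k,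
      (θ * (c t ω * ξ t ω) - ρ * (Real.exp θ - 1) * c t ω)) := by
    refine fun k => Measurable.exp (Finset.measurable_sum _ fun t ht => ?_)
    obtain ⟨ht1, htk⟩ := Finset.mem_Icc.1 ht
    have hc : Measurable[ℱ t] (c t) := (hcmeas t ht1).mono (horder t ht1).2 le_rfl
    exact ((hc.mul (hξmeas t ht1)).const_mul θ |>.sub (hc.const_mul _)).mono (ℱ.mono htk) le_rfl
  induction k with
  | zero => simp
  | succ k ih =>
    have hk : 1 ≤ k + 1 := Nat.le_add_left 1 k
    have hle : ℱ k ≤ 𝒢 (k + 1) := by simpa using (horder (k + 1) hk).1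
    simp only [Finset.sum_Icc_succ_top hk, Real.exp_add]
    obtain ⟨hi, hint⟩ := integrable_mul_exp_and_integral_le_of_condExp_eq_const θ
      ((horder (k + 1) hk).2.trans (ℱ.le (k + 1))) ((hmeas k).mono hle le_rfl)
      (fun ω => Real.exp_nonneg _) ih.1 (hcmeas (k + 1) hk) (hcval (k + 1))
      ((hξmeas (k + 1) hk).mono (ℱ.le (k + 1)) le_rfl) (hξval (k + 1)) (hcond (k + 1) hk)
    exact ⟨hi, hint.trans ih.2⟩

theorem measure_chernoff_exponent_ge_le_exp_neg [IsProbabilityMeasure μ]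
    (ℱ : Filtration ℕ m0) (𝒢 : ℕ → MeasurableSpace Ω) {ρ : ℝ} {ξ c : ℕ → Ω → ℝ}
    (horder : ∀ t, 1 ≤ t → ℱ (t - 1) ≤ 𝒢 t ∧ 𝒢 t ≤ ℱ t)
    (hξval : ∀ t ω, ξ t ω = 0 ∨ ξ t ω = 1) (hcval : ∀ t ω, c t ω = 0 ∨ c t ω = 1)
    (hcmeas : ∀ t, 1 ≤ t → Measurable[𝒢 t] (c t))
    (hξmeas : ∀ t, 1 ≤ t → Measurable[ℱ t] (ξ t))
    (hcond : ∀ t, 1 ≤ t → μ[ξ t | 𝒢 t] =ᵐ[μ] fun _ => ρ) (θ b : ℝ) (T : ℕ) :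
    μ {ω | b ≤ θ * ∑ t ∈ Finset.Icc 1 T, c t ω * ξ t ω -
        ρ * (Real.exp θ - 1) * ∑ t ∈ Finset.Icc 1 T, c t ω} ≤ ENNReal.ofReal (Real.exp (-b)) := by
  obtain ⟨hi, hle⟩ := integrable_exp_sum_and_integral_le_one ℱ 𝒢 horder hξval hcval hcmeas
    hξmeas hcond θ T
  have hsum : ∀ ω, ∑ t ∈ Finset.Icc 1 T, (θ * (c t ω * ξ t ω) - ρ * (Real.exp θ - 1) * c t ω) =
      θ * ∑ t ∈ Finset.Icc 1 T, c t ω * ξ t ω -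
        ρ * (Real.exp θ - 1) * ∑ t ∈ Finset.Icc 1 T, c t ω := fun ω => by
    rw [Finset.sum_sub_distrib, Finset.mul_sum, Finset.mul_sum]
  simp only [hsum] at hi hle
  have hchernoff := ProbabilityTheory.measure_ge_le_exp_mul_mgf b zero_le_one (by simpa using hi)
  rw [ENNReal.le_ofReal_iff_toReal_le (measure_ne_top μ _) (Real.exp_nonneg _)]
  calc _ ≤ _ := hchernoff
    _ ≤ Real.exp (-b) := by
      simpa [ProbabilityTheory.mgf] using mul_le_of_le_one_right (Real.exp_nonneg (-b)) hle

theorem measure_abs_sum_mul_sub_ge_le [IsProbabilityMeasure μ]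
    (ℱ : Filtration ℕ m0) (𝒢 : ℕ → MeasurableSpace Ω) {ρ ε : ℝ} {ξ c : ℕ → Ω → ℝ}
    (horder : ∀ t, 1 ≤ t → ℱ (t - 1) ≤ 𝒢 t ∧ 𝒢 t ≤ ℱ t)
    (hξval : ∀ t ω, ξ t ω = 0 ∨ ξ t ω = 1) (hcval : ∀ t ω, c t ω = 0 ∨ c t ω = 1)
    (hcmeas : ∀ t, 1 ≤ t → Measurable[𝒢 t] (c t))
    (hξmeas : ∀ t, 1 ≤ t → Measurable[ℱ t] (ξ t))
    (hcond : ∀ t, 1 ≤ t → μ[ξ t | 𝒢 t] =ᵐ[μ] fun _ => ρ)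
    (hρ : 0 ≤ ρ) (hε0 : 0 < ε) (hε1 : ε ≤ 1) (T : ℕ) :
    μ {ω | ε / 2 * (ρ * T) ≤
        |∑ t ∈ Finset.Icc 1 T, c t ω * ξ t ω - ρ * ∑ t ∈ Finset.Icc 1 T, c t ω|} ≤
      ENNReal.ofReal (2 * Real.exp (-(9 / 88 * ε ^ 2 * (ρ * T)))) := by
  set b := 9 / 88 * ε ^ 2 * (ρ * T)
  -- `|θ| = 9 ε / 22` maximises `|θ| ε / 2 - 11 / 18 θ ^ 2`, with value `9 ε ^ 2 / 88`
  have htail := fun θ => measure_chernoff_exponent_ge_le_exp_neg ℱ 𝒢 horder hξval hcval hcmeas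
    hξmeas hcond (μ := μ) θ b T
  have hc01 : ∀ t ω, 0 ≤ c t ω ∧ c t ω ≤ 1 := fun t ω => by
    rcases hcval t ω with h | h <;> norm_num [h]
  have hK : ∀ ω, 0 ≤ ∑ t ∈ Finset.Icc 1 T, c t ω ∧ ∑ t ∈ Finset.Icc 1 T, c t ω ≤ T := fun ω =>
    ⟨Finset.sum_nonneg fun t _ => (hc01 t ω).1,
      by simpa using Finset.sum_le_sum fun t (_ : t ∈ Finset.Icc 1 T) => (hc01 t ω).2⟩
  calc μ {ω | ε / 2 * (ρ * T) ≤
        |∑ t ∈ Finset.Icc 1 T, c t ω * ξ t ω - ρ * ∑ t ∈ Finset.Icc 1 T, c t ω|}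
      ≤ μ ({ω | b ≤ 9 / 22 * ε * ∑ t ∈ Finset.Icc 1 T, c t ω * ξ t ω -
          ρ * (Real.exp (9 / 22 * ε) - 1) * ∑ t ∈ Finset.Icc 1 T, c t ω} ∪
        {ω | b ≤ -(9 / 22 * ε) * ∑ t ∈ Finset.Icc 1 T, c t ω * ξ t ω -
          ρ * (Real.exp (-(9 / 22 * ε)) - 1) * ∑ t ∈ Finset.Icc 1 T, c t ω}) := by
        refine measure_mono fun ω hω => ?_
        have habs : |9 / 22 * ε| = 9 / 22 * ε := abs_of_pos (by positivity)
        rw [mem_ofPred_eq] at hω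
        rcases le_abs'.1 hω with hneg | hpos
        · refine Or.inr (le_chernoff_exponent hρ hε1 (hK ω).1 (hK ω).2 (by rwa [abs_neg]) ?_)
          rw [abs_neg, habs]; nlinarith
        · refine Or.inl (le_chernoff_exponent hρ hε1 (hK ω).1 (hK ω).2 habs ?_)
          rw [habs]; nlinarith
    _ ≤ ENNReal.ofReal (Real.exp (-b)) + ENNReal.ofReal (Real.exp (-b)) :=
        (measure_union_le _ _).trans (add_le_add (htail _) (htail _))
    _ = ENNReal.ofReal (2 * Real.exp (-b)) := by
        rw [two_mul, ENNReal.ofReal_add (Real.exp_nonneg _) (Real.exp_nonneg _)]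

end AdaptiveBernoulli

/-- `s t` indicates that the `t`-th stream element lies in `S` and `ξ t` that it is retained;
`𝒢 t` is the history once the `t`-th element is chosen, `ℱ t` once it is also sampled. -/
theorem bernoulli_sampling_representative
    {Ω : Type*} {m0 : MeasurableSpace Ω} (μ : Measure Ω) [IsProbabilityMeasure μ]
    (ℱ : Filtration ℕ m0) (𝒢 : ℕ → MeasurableSpace Ω)
    (ρ : ℝ) (hρ : ρ ∈ Set.Ioo (0:ℝ) 1) (T : ℕ) (hT : 0 < T)
    (s ξ : ℕ → Ω → ℝ)
    (horder : ∀ t, 1 ≤ t → ℱ (t - 1) ≤ 𝒢 t ∧ 𝒢 t ≤ ℱ t)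
    (hsval : ∀ t ω, s t ω = 0 ∨ s t ω = 1)
    (hξval : ∀ t ω, ξ t ω = 0 ∨ ξ t ω = 1)
    (hsmeas : ∀ t, 1 ≤ t → Measurable[𝒢 t] (s t))
    (hξmeas : ∀ t, 1 ≤ t → Measurable[ℱ t] (ξ t))
    (hcond : ∀ t, 1 ≤ t → μ[ξ t | 𝒢 t] =ᵐ[μ] fun _ => ρ)
    (δ ε : ℝ) (hδ : δ ∈ Set.Ioo (0:ℝ) 1) (hε : ε ∈ Set.Ioo (0:ℝ) 1)
    (hρbound : 10 * Real.log (4 / δ) / (ε ^ 2 * T) ≤ ρ) :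
    μ {ω | ε ≤
        |(∑ t ∈ Finset.Icc 1 T, s t ω) / T -
          (∑ t ∈ Finset.Icc 1 T, s t ω * ξ t ω) / (∑ t ∈ Finset.Icc 1 T, ξ t ω)|} ≤
      ENNReal.ofReal δ := by
  obtain ⟨hρ0, -⟩ := hρ
  obtain ⟨hδ0, hδ1⟩ := hδ
  obtain ⟨hε0, hε1⟩ := hε
  have hcard : ((#(Finset.Icc 1 T) : ℕ) : ℝ) = T := by simp
  have hdev := fun c hcval hcmeas => measure_abs_sum_mul_sub_ge_le ℱ 𝒢 (μ := μ) (c := c) horder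
    hξval hcval hcmeas hξmeas hcond hρ0.le hε0 hε1.le T
  have hbad : {ω | ε ≤ |(∑ t ∈ Finset.Icc 1 T, s t ω) / T -
        (∑ t ∈ Finset.Icc 1 T, s t ω * ξ t ω) / (∑ t ∈ Finset.Icc 1 T, ξ t ω)|} ⊆
      {ω | ε / 2 * (ρ * T) ≤ |∑ t ∈ Finset.Icc 1 T, 1 * ξ t ω - ρ * ∑ t ∈ Finset.Icc 1 T, 1|} ∪
      {ω | ε / 2 * (ρ * T) ≤
        |∑ t ∈ Finset.Icc 1 T, s t ω * ξ t ω - ρ * ∑ t ∈ Finset.Icc 1 T, s t ω|} := by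
    intro ω hω
    by_contra hgood
    simp only [mem_union, mem_ofPred_eq, not_or, not_le, one_mul, Finset.sum_const,
      nsmul_eq_mul, mul_one] at hgood hω
    rw [← hcard] at hω hgood
    exact hω.not_gt (abs_sum_div_card_sub_sum_mul_div_sum_lt _ (hsval · ω) (hξval · ω) hρ0
      (Finset.nonempty_Icc.2 hT) hε1 hgood.1 hgood.2)
  calc μ _ ≤ μ (_ ∪ _) := measure_mono hbad
    _ ≤ _ + _ := measure_union_le _ _
    _ ≤ _ + _ := add_le_add (hdev _ (fun _ _ => Or.inr rfl) fun _ _ => measurable_const)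
          (hdev s hsval hsmeas)
    _ ≤ ENNReal.ofReal δ := by
        rw [← ENNReal.ofReal_add (by positivity) (by positivity)]
        exact ENNReal.ofReal_le_ofReal (by
          linarith [four_mul_exp_neg_le_of_log_div_le hT hδ0 hδ1 hε0 hρbound])
end

section
/- For reservoir sampling with reservoir size ρ over an adaptively generated stream of length T, define Z_t = (t/ρ)|S ∩ reservoir_t| − |S ∩ C_t| for t > ρ (and Z_t = 0 for t ≤ ρ). Then (Z_t) is a martingale whose increments satisfy |Z_t − Z_{t-1}| ≤ t/ρ and whose conditional variance at step t is at most t/ρ. Consequently, if ρ ≥ (2/ε²)·ln(2/δ), then P(|d_S(C_T) − d_S(reservoir_T)| ≥ ε) ≤ δ. -/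
/-!
With `b = t/ρ`, `d = |S ∩ reservoir_{t-1}|/ρ` and indicators `s` (the new element is in `S`),
`ins` (it is inserted) and `rem` (it is inserted and evicts an element of `S`), the increment is
`Z_t - Z_{t-1} = b (ins·s - rem) + (d - s)`. Conditioning first on the insertion coin replaces
`rem` by `ins·d` (the evicted slot is uniform), and conditioning then on the new element replaces
`ins` by `1/b`. This kills the mean and leaves the conditional second moment
`b (s + d - 2sd) - (d - s)² ≤ b`.

For concentration, `e^y ≤ 1 + y + (1/2 + 2u/9) y²` on `|y| ≤ u ≤ 1` gives the Freedman-type bound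
`E e^{λ X_N} ≤ exp ((1/2 + 2u/9) λ² ∑ v_n)` for a martingale with increments at most `c_n`,
conditional variances at most `v_n` and `λ c_n ≤ u`. Taking `λ = ερ/T`, `u = ε` and
`∑_{n<T} (n+1)/ρ = T(T+1)/(2ρ)`, Chernoff's bound on both tails gives `2 exp (-(14/27) ε² ρ) ≤ δ`.
-/

open MeasureTheory Filter Set Real

lemma exp_le_one_add_add_mul_sq {y u : ℝ} (hy : |y| ≤ u) (hu : u ≤ 1) :
    exp y ≤ 1 + y + (1 / 2 + 2 * u / 9) * y ^ 2 := by
  -- the degree-3 Taylor remainder of `exp` on `[-1, 1]` is at most `(2/9) |y|³`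
  have h := (abs_le.mp (Real.exp_bound (hy.trans hu) (n := 3) (by norm_num))).2
  have hcube : |y| ^ 3 ≤ u * y ^ 2 := by
    rw [pow_succ', ← sq_abs y]
    exact mul_le_mul_of_nonneg_right hy (sq_nonneg _)
  norm_num [Finset.sum_range_succ, Nat.factorial] at h
  nlinarith

lemma condExp_add_mul_of_stronglyMeasurable {Ω : Type*} {m m0 : MeasurableSpace Ω} {μ : Measure Ω}
    {a c g : Ω → ℝ} (hm : m ≤ m0) [SigmaFinite (μ.trim hm)] (ha : StronglyMeasurable[m] a)
    (hc : StronglyMeasurable[m] c) (hai : Integrable a μ) (hcg : Integrable (c * g) μ)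
    (hg : Integrable g μ) :
    μ[a + c * g | m] =ᵐ[μ] a + c * μ[g | m] := by
  filter_upwards [condExp_add hai hcg m, condExp_mul_of_stronglyMeasurable_left hc hcg hg]
    with ω h₁ h₂
  simp only [h₁, Pi.add_apply, h₂, condExp_of_stronglyMeasurable hm ha hai]

lemma condExp_le_const_of_condExp_le_const {Ω : Type*} {m m' m0 : MeasurableSpace Ω}
    {μ : Measure Ω} [IsFiniteMeasure μ] (hmm' : m ≤ m') (hm' : m' ≤ m0) {f : Ω → ℝ} {c : ℝ}
    (h : μ[f | m'] ≤ᵐ[μ] fun _ => c) : μ[f | m] ≤ᵐ[μ] fun _ => c :=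
  (condExp_condExp_of_le hmm' hm').symm.le.trans <|
    (condExp_mono integrable_condExp (integrable_const c) h).trans
      (ae_of_all _ fun ω => (congrFun (condExp_const (hmm'.trans hm') c) ω).le)

lemma integrable_exp_mul_of_abs_le {Ω : Type*} {m0 : MeasurableSpace Ω} {μ : Measure Ω}
    [IsFiniteMeasure μ] {D : Ω → ℝ} (hD : AEStronglyMeasurable D μ) {c : ℝ}
    (hDc : ∀ ω, |D ω| ≤ c) (l : ℝ) : Integrable (fun ω => exp (l * D ω)) μ :=
  .of_bound (continuous_exp.comp_aestronglyMeasurable (hD.const_mul l)) (exp (|l| * c))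
    (ae_of_all _ fun ω => by
      rw [norm_eq_abs, abs_of_pos (exp_pos _), exp_le_exp]
      calc l * D ω ≤ |l| * |D ω| := by rw [← abs_mul]; exact le_abs_self _
        _ ≤ |l| * c := mul_le_mul_of_nonneg_left (hDc ω) (abs_nonneg l))

lemma condExp_exp_mul_le {Ω : Type*} {m m0 : MeasurableSpace Ω} {μ : Measure Ω}
    [IsFiniteMeasure μ] (hm : m ≤ m0) {D : Ω → ℝ} (hD : AEStronglyMeasurable D μ)
    {c v l u : ℝ} (hDc : ∀ ω, |D ω| ≤ c) (hl : 0 ≤ l) (hlc : l * c ≤ u) (hu : u ≤ 1)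
    (hmean : μ[D | m] =ᵐ[μ] 0) (hvar : μ[fun ω => D ω ^ 2 | m] ≤ᵐ[μ] fun _ => v) :
    μ[fun ω => exp (l * D ω) | m] ≤ᵐ[μ] fun _ => exp ((1 / 2 + 2 * u / 9) * l ^ 2 * v) := by
  set C := 1 / 2 + 2 * u / 9 with hC
  set D2 : Ω → ℝ := fun ω => D ω ^ 2
  have hlD : ∀ ω, |l * D ω| ≤ u := fun ω => by
    rw [abs_mul, abs_of_nonneg hl]
    exact (mul_le_mul_of_nonneg_left (hDc ω) hl).trans hlc
  have hD_int : Integrable D μ := .of_bound hD c (ae_of_all _ hDc)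
  have hD2_int : Integrable D2 μ :=
    .of_bound (hD.pow 2) (c ^ 2) (ae_of_all _ fun ω => by
      simpa [D2] using pow_le_pow_left₀ (abs_nonneg _) (hDc ω) 2)
  have h1_int : Integrable (1 : Ω → ℝ) μ := integrable_const 1
  have hlin_int : Integrable (1 + l • D) μ := h1_int.add (hD_int.smul l)
  have hquad : μ[1 + l • D + (C * l ^ 2) • D2 | m] =ᵐ[μ]
      1 + l • μ[D | m] + (C * l ^ 2) • μ[D2 | m] := by
    filter_upwards [condExp_add hlin_int (hD2_int.smul (C * l ^ 2)) m,
      condExp_add h1_int (hD_int.smul l) m, condExp_smul (μ := μ) l D m,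
      condExp_smul (μ := μ) (C * l ^ 2) D2 m] with ω h₁ h₂ h₃ h₄
    rw [h₁, Pi.add_apply, h₂]
    simp only [Pi.add_apply, h₃, h₄, Pi.one_def, condExp_const hm]
  have hbound : (fun ω => exp (l * D ω)) ≤ 1 + l • D + (C * l ^ 2) • D2 := fun ω => by
    have h := exp_le_one_add_add_mul_sq (hlD ω) hu
    rw [← hC] at h
    simpa [D2, mul_pow, mul_assoc] using h
  filter_upwards [condExp_mono (m := m) (integrable_exp_mul_of_abs_le hD hDc l)
      (hlin_int.add (hD2_int.smul (C * l ^ 2))) (ae_of_all _ hbound), hquad, hmean, hvar]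
    with ω h₁ h₂ h₃ h₄
  simp only [h₂, Pi.add_apply, Pi.smul_apply, h₃, Pi.zero_apply, Pi.one_apply, smul_eq_mul] at h₁
  have hC0 : 0 ≤ C * l ^ 2 := by
    have := (abs_nonneg _).trans (hlD ω)
    positivity
  calc _ ≤ 1 + C * l ^ 2 * v := h₁.trans (by nlinarith)
    _ ≤ _ := by linarith [add_one_le_exp (C * l ^ 2 * v)]

lemma abs_le_sum_of_abs_sub_le {f : ℕ → ℝ} (hf0 : f 0 = 0) {c : ℕ → ℝ}
    (hc : ∀ n, |f (n + 1) - f n| ≤ c n) (N : ℕ) : |f N| ≤ ∑ n ∈ Finset.range N, c n := by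
  simpa [Real.dist_eq, hf0] using
    dist_le_range_sum_of_dist_le (f := f) N fun {n} _ => by rw [dist_comm, Real.dist_eq]; exact hc n

lemma integrable_exp_mul_of_abs_sub_le {Ω : Type*} {m0 : MeasurableSpace Ω} {μ : Measure Ω}
    [IsFiniteMeasure μ] {X : ℕ → Ω → ℝ} {c : ℕ → ℝ} {N : ℕ} (hXN : AEStronglyMeasurable (X N) μ)
    (hX0 : X 0 = 0) (hc : ∀ n ω, |X (n + 1) ω - X n ω| ≤ c n) (l : ℝ) :
    Integrable (fun ω => exp (l * X N ω)) μ :=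
  integrable_exp_mul_of_abs_le hXN
    (fun ω => abs_le_sum_of_abs_sub_le (f := fun n => X n ω) (congrFun hX0 ω) (hc · ω) N) l

lemma MeasureTheory.Martingale.condExp_sub_ae_eq_zero {Ω : Type*} {m0 : MeasurableSpace Ω}
    {μ : Measure Ω} [IsFiniteMeasure μ] {ℱ : Filtration ℕ m0} {X : ℕ → Ω → ℝ}
    (hX : Martingale X ℱ μ) {i j : ℕ} (hij : i ≤ j) : μ[X j - X i | ℱ i] =ᵐ[μ] 0 := by
  filter_upwards [condExp_sub (hX.integrable j) (hX.integrable i) (ℱ i), hX.condExp_ae_eq hij]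
    with ω h₁ h₂
  rw [h₁, Pi.sub_apply, h₂, condExp_of_stronglyMeasurable (ℱ.le i) (hX.stronglyAdapted i)
    (hX.integrable i), sub_self, Pi.zero_apply]

section Freedman

variable {Ω : Type*} {m0 : MeasurableSpace Ω} {μ : Measure Ω} [IsProbabilityMeasure μ]
  {ℱ : Filtration ℕ m0} {X : ℕ → Ω → ℝ} {c v : ℕ → ℝ} {l u : ℝ}

lemma integral_exp_mul_le_of_martingale (hX : Martingale X ℱ μ) (hX0 : X 0 = 0)
    (hc : ∀ n ω, |X (n + 1) ω - X n ω| ≤ c n)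
    (hv : ∀ n, μ[fun ω => (X (n + 1) ω - X n ω) ^ 2 | ℱ n] ≤ᵐ[μ] fun _ => v n)
    (hl : 0 ≤ l) (hu : u ≤ 1) (N : ℕ) (hlc : ∀ n < N, l * c n ≤ u) :
    ∫ ω, exp (l * X N ω) ∂μ ≤ exp ((1 / 2 + 2 * u / 9) * l ^ 2 * ∑ n ∈ Finset.range N, v n) := by
  have hexp_int : ∀ k, Integrable (fun ω => exp (l * X k ω)) μ := fun k =>
    integrable_exp_mul_of_abs_sub_le (hX.integrable k).aestronglyMeasurable hX0 hc l
  induction N with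
  | zero => simp [hX0]
  | succ N ih =>
    set D := X (N + 1) - X N
    have hD_int : Integrable D μ := (hX.integrable (N + 1)).sub (hX.integrable N)
    have hstep := condExp_exp_mul_le (ℱ.le N) hD_int.aestronglyMeasurable (hc N) hl
      (hlc N N.lt_succ_self) hu (hX.condExp_sub_ae_eq_zero N.le_succ) (hv N)
    have hpull : μ[fun ω => exp (l * X (N + 1) ω) | ℱ N] =ᵐ[μ]
        (fun ω => exp (l * X N ω)) * μ[fun ω => exp (l * D ω) | ℱ N] := by
      have : (fun ω => exp (l * X (N + 1) ω)) =
          (fun ω => exp (l * X N ω)) * fun ω => exp (l * D ω) := by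
        ext ω; simp only [Pi.mul_apply, D, Pi.sub_apply, ← exp_add]; ring_nf
      rw [this]
      refine condExp_mul_of_stronglyMeasurable_left
        (continuous_exp.comp_stronglyMeasurable ((hX.stronglyAdapted N).const_mul l)) ?_ ?_
      · rw [← this]; exact hexp_int (N + 1)
      · exact integrable_exp_mul_of_abs_le hD_int.aestronglyMeasurable (hc N) l
    calc ∫ ω, exp (l * X (N + 1) ω) ∂μ
        = ∫ ω, μ[fun ω => exp (l * X (N + 1) ω) | ℱ N] ω ∂μ := (integral_condExp (ℱ.le N)).symm
      _ ≤ ∫ ω, exp (l * X N ω) * exp ((1 / 2 + 2 * u / 9) * l ^ 2 * v N) ∂μ := by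
        refine integral_mono_ae integrable_condExp ((hexp_int N).mul_const _) ?_
        filter_upwards [hpull, hstep] with ω h₁ h₂
        rw [h₁, Pi.mul_apply]
        exact mul_le_mul_of_nonneg_left h₂ (exp_pos _).le
      _ ≤ exp ((1 / 2 + 2 * u / 9) * l ^ 2 * ∑ n ∈ Finset.range N, v n) *
          exp ((1 / 2 + 2 * u / 9) * l ^ 2 * v N) := by
        rw [integral_mul_const]
        exact mul_le_mul_of_nonneg_right (ih fun n hn => hlc n (hn.trans N.lt_succ_self))
          (exp_pos _).le
      _ = _ := by rw [← exp_add, Finset.sum_range_succ, mul_add]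

lemma measure_ge_le_of_martingale (hX : Martingale X ℱ μ) (hX0 : X 0 = 0)
    (hc : ∀ n ω, |X (n + 1) ω - X n ω| ≤ c n)
    (hv : ∀ n, μ[fun ω => (X (n + 1) ω - X n ω) ^ 2 | ℱ n] ≤ᵐ[μ] fun _ => v n)
    (hl : 0 ≤ l) (hu : u ≤ 1) (N : ℕ) (hlc : ∀ n < N, l * c n ≤ u) (a : ℝ) :
    μ {ω | a ≤ X N ω} ≤
      ENNReal.ofReal (exp ((1 / 2 + 2 * u / 9) * l ^ 2 * ∑ n ∈ Finset.range N, v n - l * a)) := by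
  rw [ENNReal.le_ofReal_iff_toReal_le (measure_ne_top μ _) (exp_pos _).le, ← measureReal_def]
  calc μ.real {ω | a ≤ X N ω} ≤ exp (-l * a) * ProbabilityTheory.mgf (X N) μ l :=
        ProbabilityTheory.measure_ge_le_exp_mul_mgf a hl
          (integrable_exp_mul_of_abs_sub_le (hX.integrable N).aestronglyMeasurable hX0 hc l)
    _ ≤ exp (-l * a) * exp ((1 / 2 + 2 * u / 9) * l ^ 2 * ∑ n ∈ Finset.range N, v n) :=
        mul_le_mul_of_nonneg_left (integral_exp_mul_le_of_martingale hX hX0 hc hv hl hu N hlc)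
          (exp_pos _).le
    _ = _ := by rw [← exp_add]; ring_nf

lemma measure_abs_ge_le_of_martingale (hX : Martingale X ℱ μ) (hX0 : X 0 = 0)
    (hc : ∀ n ω, |X (n + 1) ω - X n ω| ≤ c n)
    (hv : ∀ n, μ[fun ω => (X (n + 1) ω - X n ω) ^ 2 | ℱ n] ≤ᵐ[μ] fun _ => v n)
    (hl : 0 ≤ l) (hu : u ≤ 1) (N : ℕ) (hlc : ∀ n < N, l * c n ≤ u) (a : ℝ) :
    μ {ω | a ≤ |X N ω|} ≤ ENNReal.ofReal
      (2 * exp ((1 / 2 + 2 * u / 9) * l ^ 2 * ∑ n ∈ Finset.range N, v n - l * a)) := by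
  have hXneg0 : (-X) 0 = 0 := by rw [Pi.neg_apply, hX0, neg_zero]
  have hcneg : ∀ n ω, |(-X) (n + 1) ω - (-X) n ω| ≤ c n := fun n ω => by
    simp only [Pi.neg_apply, neg_sub_neg]
    rw [abs_sub_comm]
    exact hc n ω
  have hvneg : ∀ n, μ[fun ω => ((-X) (n + 1) ω - (-X) n ω) ^ 2 | ℱ n] ≤ᵐ[μ] fun _ => v n :=
    fun n => by simpa only [Pi.neg_apply, neg_sub_neg, sub_sq_comm] using hv n
  have hunion : {ω | a ≤ |X N ω|} ⊆ {ω | a ≤ X N ω} ∪ {ω | a ≤ (-X) N ω} := fun ω hω => by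
    simpa [le_abs, le_neg] using hω
  calc μ {ω | a ≤ |X N ω|} ≤ μ {ω | a ≤ X N ω} + μ {ω | a ≤ (-X) N ω} :=
        (measure_mono hunion).trans (measure_union_le _ _)
    _ ≤ _ := by
      rw [two_mul, ENNReal.ofReal_add (exp_pos _).le (exp_pos _).le]
      exact add_le_add (measure_ge_le_of_martingale hX hX0 hc hv hl hu N hlc a)
        (measure_ge_le_of_martingale hX.neg hXneg0 hcneg hvneg hl hu N hlc a)

end Freedman

lemma sum_range_add_one_div (ρ : ℝ) (N : ℕ) :
    ∑ n ∈ Finset.range N, ((n : ℝ) + 1) / ρ = N * (N + 1) / (2 * ρ) := by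
  induction N with
  | zero => simp
  | succ N ih => rw [Finset.sum_range_succ, ih]; push_cast; field_simp; ring

lemma two_mul_exp_le_of_two_div_sq_mul_log_le {ρ T : ℕ} (hρT : ρ < T) {δ ε : ℝ}
    (hδ : δ ∈ Ioo (0 : ℝ) 1) (hε : ε ∈ Ioo (0 : ℝ) 1) (hρ : 2 / ε ^ 2 * log (2 / δ) ≤ ρ) :
    2 * exp ((1 / 2 + 2 * ε / 9) * (ε * ρ / T) ^ 2 * ∑ n ∈ Finset.range T, ((n : ℝ) + 1) / ρ
      - ε * ρ / T * (ε * T)) ≤ δ := by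
  obtain ⟨hδ0, hδ1⟩ := hδ
  obtain ⟨hε0, hε1⟩ := hε
  have hlog : log 2 < log (2 / δ) := log_lt_log two_pos (by rw [lt_div_iff₀ hδ0]; linarith)
  have hlog2 := log_two_gt_d9
  have hερ : 2 * log (2 / δ) ≤ ε ^ 2 * ρ := by
    rw [div_mul_eq_mul_div, div_le_iff₀ (by positivity)] at hρ; linarith
  have hρ1 : 1 < ρ := by exact_mod_cast (by nlinarith : (1 : ℝ) < ρ)
  have hT3 : (3 : ℝ) ≤ T := by exact_mod_cast (by omega : 3 ≤ T)
  have hρ0 : (0 : ℝ) < ρ := by positivity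
  -- `T ≥ 3` is what makes `(T+1)/(2T) ≤ 2/3`; it holds because `ε²ρ ≥ 2 log (2/δ) > 1`
  have hexp : (1 / 2 + 2 * ε / 9) * (ε * ρ / T) ^ 2 * (T * (T + 1) / (2 * ρ))
      - ε * ρ / T * (ε * T) ≤ -log (2 / δ) := by
    have hfrac : ((T : ℝ) + 1) / (2 * T) ≤ 2 / 3 := by
      rw [div_le_iff₀ (by positivity)]; linarith
    have hC : (1 / 2 + 2 * ε / 9) * (((T : ℝ) + 1) / (2 * T)) ≤ 13 / 27 := by
      have : (0 : ℝ) ≤ ((T : ℝ) + 1) / (2 * T) := by positivity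
      nlinarith
    have heq : (1 / 2 + 2 * ε / 9) * (ε * ρ / T) ^ 2 * (T * (T + 1) / (2 * ρ))
        - ε * ρ / T * (ε * T) = ε ^ 2 * ρ * ((1 / 2 + 2 * ε / 9) * ((T + 1) / (2 * T)) - 1) := by
      field_simp
    rw [heq]
    nlinarith [mul_le_mul_of_nonneg_left hC (by positivity : (0 : ℝ) ≤ ε ^ 2 * ρ)]
  calc _ ≤ 2 * exp (-log (2 / δ)) := by rw [sum_range_add_one_div]; gcongr
    _ = δ := by rw [exp_neg, exp_log (by positivity)]; field_simp

lemma mul_div_mul_add_one_div_le {ρ T n : ℕ} (hρ : 0 < ρ) (hn : n < T) {ε : ℝ} (hε : 0 ≤ ε) :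
    ε * ρ / T * (((n : ℝ) + 1) / ρ) ≤ ε := by
  have hT : (0 : ℝ) < T := by exact_mod_cast (Nat.zero_le n).trans_lt hn
  have hρ' : (ρ : ℝ) ≠ 0 := by exact_mod_cast hρ.ne'
  rw [show ε * ρ / T * (((n : ℝ) + 1) / ρ) = ε * (((n : ℝ) + 1) / T) by field_simp]
  exact mul_le_of_le_one_right hε ((div_le_one hT).mpr (by exact_mod_cast hn))

section ReservoirStep

variable {Ω : Type*} {m0 : MeasurableSpace Ω}

/-- One step `t > ρ` of reservoir sampling, given the history and the new element (`m`), and in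
addition the insertion coin (`m'`): `b = t/ρ`, `s` indicates that the new element is in `S`, `d` is
the fraction of the reservoir lying in `S`, `ins` indicates insertion, and `rem` indicates an
insertion that evicts an element of `S`. -/
structure IsReservoirStep (μ : Measure Ω) (m m' : MeasurableSpace Ω) (b : ℝ)
    (s d ins rem : Ω → ℝ) : Prop where
  le : m ≤ m'
  le_ambient : m' ≤ m0
  measurable_s : Measurable[m] s
  measurable_d : Measurable[m] d
  measurable_ins : Measurable[m'] ins
  measurable_rem : Measurable[m0] rem
  s_mem : ∀ ω, s ω = 0 ∨ s ω = 1
  d_mem : ∀ ω, 0 ≤ d ω ∧ d ω ≤ 1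
  ins_mem : ∀ ω, ins ω = 0 ∨ ins ω = 1
  rem_mem : ∀ ω, rem ω = 0 ∨ rem ω = 1
  condExp_ins : μ[ins | m] =ᵐ[μ] fun _ => b⁻¹
  condExp_rem : μ[rem | m'] =ᵐ[μ] ins * d

def reservoirIncrement (b : ℝ) (s d ins rem : Ω → ℝ) (ω : Ω) : ℝ :=
  b * (ins ω * s ω - rem ω) + (d ω - s ω)

lemma abs_reservoirIncrement_le {b : ℝ} {s d ins rem : Ω → ℝ} {ω : Ω} (hb : 1 ≤ b)
    (hs : s ω = 0 ∨ s ω = 1) (hd : 0 ≤ d ω ∧ d ω ≤ 1) (hins : ins ω = 0 ∨ ins ω = 1)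
    (hrem : rem ω = 0 ∨ rem ω = 1) (hrem_le : rem ω ≤ ins ω) :
    |reservoirIncrement b s d ins rem ω| ≤ b := by
  obtain ⟨hd0, hd1⟩ := hd
  rw [reservoirIncrement, abs_le]
  rcases hs with hs | hs <;> rcases hins with hi | hi <;> rcases hrem with hr | hr <;>
    simp only [hs, hi, hr] at hrem_le ⊢ <;> constructor <;> linarith

lemma memLp_top_of_eq_zero_or_eq_one {μ : Measure Ω} {f : Ω → ℝ} (hf : Measurable f)
    (h : ∀ ω, f ω = 0 ∨ f ω = 1) : MemLp f ⊤ μ :=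
  memLp_top_of_bound hf.aestronglyMeasurable 1
    (ae_of_all _ fun ω => by rcases h ω with h | h <;> simp [h])

namespace IsReservoirStep

variable {μ : Measure Ω} {m m' : MeasurableSpace Ω} {b : ℝ}
  {s d ins rem : Ω → ℝ}

lemma memLp_s (hS : IsReservoirStep μ m m' b s d ins rem) : MemLp s ⊤ μ :=
  memLp_top_of_eq_zero_or_eq_one (hS.measurable_s.mono (hS.le.trans hS.le_ambient) le_rfl)
    hS.s_mem

lemma memLp_d (hS : IsReservoirStep μ m m' b s d ins rem) : MemLp d ⊤ μ :=
  memLp_top_of_bound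
    (hS.measurable_d.mono (hS.le.trans hS.le_ambient) le_rfl).aestronglyMeasurable 1
    (ae_of_all _ fun ω => by
      rw [Real.norm_eq_abs, abs_le]; constructor <;> linarith [hS.d_mem ω])

lemma memLp_ins (hS : IsReservoirStep μ m m' b s d ins rem) : MemLp ins ⊤ μ :=
  memLp_top_of_eq_zero_or_eq_one (hS.measurable_ins.mono hS.le_ambient le_rfl) hS.ins_mem

lemma memLp_rem (hS : IsReservoirStep μ m m' b s d ins rem) : MemLp rem ⊤ μ :=
  memLp_top_of_eq_zero_or_eq_one hS.measurable_rem hS.rem_mem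

lemma condExp_increment [IsFiniteMeasure μ] (hS : IsReservoirStep μ m m' b s d ins rem)
    (hb : b ≠ 0) : μ[reservoirIncrement b s d ins rem | m] =ᵐ[μ] 0 := by
  have hs := hS.measurable_s
  have hd := hS.measurable_d
  have hs' := hS.measurable_s.mono hS.le le_rfl
  have hd' := hS.measurable_d.mono hS.le le_rfl
  have hins := hS.measurable_ins
  have hsL := hS.memLp_s; have hdL := hS.memLp_d; have hinsL := hS.memLp_ins
  have hremL := hS.memLp_rem
  -- given `m'`, the eviction indicator `rem` may be replaced by `ins * d`
  have h₁ : μ[reservoirIncrement b s d ins rem | m'] =ᵐ[μ]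
      (fun ω => d ω - s ω) + (fun ω => b * (s ω - d ω)) * ins := by
    have heq : reservoirIncrement b s d ins rem =
        (fun ω => b * (ins ω * s ω) + (d ω - s ω)) + (fun _ => -b) * rem := by
      ext ω; simp only [reservoirIncrement, Pi.add_apply, Pi.mul_apply]; ring
    rw [heq]
    filter_upwards [condExp_add_mul_of_stronglyMeasurable
        (a := fun ω => b * (ins ω * s ω) + (d ω - s ω)) (c := fun _ => -b) hS.le_ambient
        (by fun_prop) (by fun_prop)
        ((((hsL.mul' hinsL).const_mul b).add (hdL.sub hsL)).integrable le_top)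
        ((hremL.const_mul (-b)).integrable le_top) (hremL.integrable le_top),
      hS.condExp_rem] with ω h h'
    simp only [h, Pi.add_apply, Pi.mul_apply, h']
    ring
  have h₂ : μ[(fun ω => d ω - s ω) + (fun ω => b * (s ω - d ω)) * ins | m] =ᵐ[μ] 0 := by
    filter_upwards [condExp_add_mul_of_stronglyMeasurable (a := fun ω => d ω - s ω)
        (c := fun ω => b * (s ω - d ω)) (hS.le.trans hS.le_ambient) (by fun_prop) (by fun_prop)
        ((hdL.sub hsL).integrable le_top)
        ((hinsL.mul' ((hsL.sub hdL).const_mul b)).integrable le_top) (hinsL.integrable le_top),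
      hS.condExp_ins] with ω h h'
    simp only [h, Pi.add_apply, Pi.mul_apply, h', Pi.zero_apply]
    field_simp
    ring
  calc μ[reservoirIncrement b s d ins rem | m]
      =ᵐ[μ] μ[μ[reservoirIncrement b s d ins rem | m'] | m] :=
        (condExp_condExp_of_le hS.le hS.le_ambient).symm
    _ =ᵐ[μ] μ[(fun ω => d ω - s ω) + (fun ω => b * (s ω - d ω)) * ins | m] :=
        condExp_congr_ae h₁
    _ =ᵐ[μ] 0 := h₂

lemma condExp_increment_sq_le [IsFiniteMeasure μ] (hS : IsReservoirStep μ m m' b s d ins rem)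
    (hb : 0 < b) :
    μ[fun ω => reservoirIncrement b s d ins rem ω ^ 2 | m] ≤ᵐ[μ] fun _ => b := by
  have hs := hS.measurable_s
  have hd := hS.measurable_d
  have hs' := hS.measurable_s.mono hS.le le_rfl
  have hd' := hS.measurable_d.mono hS.le le_rfl
  have hins := hS.measurable_ins
  have hsL := hS.memLp_s; have hdL := hS.memLp_d; have hinsL := hS.memLp_ins
  have hremL := hS.memLp_rem
  have hAL := ((hsL.mul' hinsL).const_mul b).add (hdL.sub hsL)
  have hdsL := hdL.sub hsL
  set A : Ω → ℝ := fun ω => b * (ins ω * s ω) + (d ω - s ω) with hA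
  set V : Ω → ℝ := fun ω => b ^ 2 * (s ω * s ω + d ω - 2 * s ω * d ω) -
    2 * b * ((d ω - s ω) * (d ω - s ω)) with hV
  -- given `m'`, `rem` becomes `ins * d`, and `ins ^ 2 = ins` makes the result affine in `ins`
  have h₁ : μ[fun ω => reservoirIncrement b s d ins rem ω ^ 2 | m'] =ᵐ[μ]
      (fun ω => (d ω - s ω) * (d ω - s ω)) + V * ins := by
    have heq : (fun ω => reservoirIncrement b s d ins rem ω ^ 2) =
        (fun ω => A ω * A ω) + (fun ω => b ^ 2 - 2 * b * A ω) * rem := by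
      ext ω
      simp only [reservoirIncrement, hA, Pi.add_apply, Pi.mul_apply]
      rcases hS.rem_mem ω with h | h <;> rw [h] <;> ring
    rw [heq]
    filter_upwards [condExp_add_mul_of_stronglyMeasurable (a := fun ω => A ω * A ω)
        (c := fun ω => b ^ 2 - 2 * b * A ω) hS.le_ambient (by fun_prop) (by fun_prop)
        ((hAL.mul' hAL).integrable le_top)
        ((hremL.mul' ((memLp_const (b ^ 2)).sub (hAL.const_mul (2 * b)))).integrable le_top)
        (hremL.integrable le_top),
      hS.condExp_rem] with ω h h'
    rw [h, Pi.add_apply, Pi.mul_apply, h']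
    simp only [hV, hA, Pi.add_apply, Pi.mul_apply]
    rcases hS.ins_mem ω with h | h <;> rw [h] <;> ring
  have h₂ : μ[(fun ω => (d ω - s ω) * (d ω - s ω)) + V * ins | m] =ᵐ[μ]
      fun ω => (d ω - s ω) * (d ω - s ω) + V ω * b⁻¹ := by
    filter_upwards [condExp_add_mul_of_stronglyMeasurable
        (a := fun ω => (d ω - s ω) * (d ω - s ω)) (c := V) (hS.le.trans hS.le_ambient)
        (by fun_prop) (by fun_prop) ((hdsL.mul' hdsL).integrable le_top)
        ((hinsL.mul' ((((hsL.mul' hsL).add hdL).sub (hdL.mul' (hsL.const_mul 2))).const_mul (b ^ 2)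
          |>.sub ((hdsL.mul' hdsL).const_mul (2 * b)))).integrable le_top)
        (hinsL.integrable le_top),
      hS.condExp_ins] with ω h h'
    rw [h, Pi.add_apply, Pi.mul_apply, h']
  have hW_le : ∀ ω, (d ω - s ω) * (d ω - s ω) + V ω * b⁻¹ ≤ b := fun ω => by
    have heq : (d ω - s ω) * (d ω - s ω) + V ω * b⁻¹ =
        b * (s ω * s ω + d ω - 2 * s ω * d ω) - (d ω - s ω) ^ 2 := by
      simp only [hV]; field_simp; ring
    obtain ⟨hd0, hd1⟩ := hS.d_mem ω
    rw [heq]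
    rcases hS.s_mem ω with h | h <;> rw [h] <;> nlinarith
  calc μ[fun ω => reservoirIncrement b s d ins rem ω ^ 2 | m]
      =ᵐ[μ] μ[μ[fun ω => reservoirIncrement b s d ins rem ω ^ 2 | m'] | m] :=
        (condExp_condExp_of_le hS.le hS.le_ambient).symm
    _ =ᵐ[μ] μ[(fun ω => (d ω - s ω) * (d ω - s ω)) + V * ins | m] := condExp_congr_ae h₁
    _ ≤ᵐ[μ] fun _ => b := h₂.le.trans (ae_of_all _ hW_le)

end IsReservoirStep

end ReservoirStep

section Reservoir

variable {Ω : Type*} {m0 : MeasurableSpace Ω}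

/-- Reservoir sampling with capacity `ρ` of an adaptive stream `c_1, c_2, …`: `s t` indicates
`c_t ∈ S`, `ins t` that `c_t` enters the reservoir, `rem t` that it enters and evicts an element
of `S`; `cnt t = |S ∩ reservoir_t|` and `strm t = |S ∩ C_t|`. Between `ℱ (t - 1)` and `ℱ t`,
`𝒢 t` reveals `c_t` and `𝒢' t` the insertion coin. -/
structure IsReservoirSampling (μ : Measure Ω) (ℱ : Filtration ℕ m0)
    (𝒢 𝒢' : ℕ → MeasurableSpace Ω) (ρ : ℕ) (s ins rem cnt strm : ℕ → Ω → ℝ) : Prop where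
  pos : 0 < ρ
  le_chain : ∀ t, 1 ≤ t → ℱ (t - 1) ≤ 𝒢 t ∧ 𝒢 t ≤ 𝒢' t ∧ 𝒢' t ≤ ℱ t
  s_mem : ∀ t ω, s t ω = 0 ∨ s t ω = 1
  ins_mem : ∀ t ω, ins t ω = 0 ∨ ins t ω = 1
  rem_mem : ∀ t ω, rem t ω = 0 ∨ rem t ω = 1
  rem_le_ins : ∀ t ω, rem t ω ≤ ins t ω
  measurable_s : ∀ t, 1 ≤ t → Measurable[𝒢 t] (s t)
  measurable_ins : ∀ t, 1 ≤ t → Measurable[𝒢' t] (ins t)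
  measurable_rem : ∀ t, 1 ≤ t → Measurable[ℱ t] (rem t)
  cnt_eq_strm : ∀ t, t ≤ ρ → ∀ ω, cnt t ω = strm t ω
  cnt_eq : ∀ t, ρ < t → ∀ ω, cnt t ω = cnt (t - 1) ω + ins t ω * s t ω - rem t ω
  cnt_mem : ∀ t ω, 0 ≤ cnt t ω ∧ cnt t ω ≤ ρ
  measurable_cnt : ∀ t, Measurable[ℱ t] (cnt t)
  strm_eq : ∀ t, 1 ≤ t → ∀ ω, strm t ω = strm (t - 1) ω + s t ω
  condExp_ins : ∀ t, ρ < t → μ[ins t | 𝒢 t] =ᵐ[μ] fun _ => (ρ : ℝ) / t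
  condExp_rem : ∀ t, ρ < t → μ[rem t | 𝒢' t] =ᵐ[μ] fun ω => ins t ω * cnt (t - 1) ω / ρ

noncomputable def reservoirDeviation (ρ : ℕ) (cnt strm : ℕ → Ω → ℝ) (t : ℕ) (ω : Ω) : ℝ :=
  if t ≤ ρ then 0 else (t / ρ : ℝ) * cnt t ω - strm t ω

lemma reservoirDeviation_zero (ρ : ℕ) (cnt strm : ℕ → Ω → ℝ) :
    reservoirDeviation ρ cnt strm 0 = 0 := by
  ext ω; simp [reservoirDeviation]

lemma reservoirDeviation_succ_sub_of_lt {ρ n : ℕ} (cnt strm : ℕ → Ω → ℝ) (hn : n < ρ) :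
    reservoirDeviation ρ cnt strm (n + 1) - reservoirDeviation ρ cnt strm n = 0 := by
  ext ω; simp [reservoirDeviation, hn.le, Nat.succ_le_of_lt hn]

namespace IsReservoirSampling

variable {μ : Measure Ω} {ℱ : Filtration ℕ m0} {𝒢 𝒢' : ℕ → MeasurableSpace Ω} {ρ : ℕ}
  {s ins rem cnt strm : ℕ → Ω → ℝ}

lemma add_one_div_pos (hR : IsReservoirSampling μ ℱ 𝒢 𝒢' ρ s ins rem cnt strm) (n : ℕ) :
    0 < ((n : ℝ) + 1) / ρ :=
  div_pos n.cast_add_one_pos (Nat.cast_pos.mpr hR.pos)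

lemma reservoirDeviation_of_le (hR : IsReservoirSampling μ ℱ 𝒢 𝒢' ρ s ins rem cnt strm) {t : ℕ}
    (ht : ρ ≤ t) (ω : Ω) : reservoirDeviation ρ cnt strm t ω = t / ρ * cnt t ω - strm t ω := by
  rcases ht.eq_or_lt with rfl | ht
  · have : (ρ : ℝ) / ρ = 1 := div_self (by exact_mod_cast hR.pos.ne')
    simp [reservoirDeviation, hR.cnt_eq_strm ρ le_rfl ω, this]
  · simp [reservoirDeviation, ht.not_ge]

lemma abs_reservoirDeviation_eq (hR : IsReservoirSampling μ ℱ 𝒢 𝒢' ρ s ins rem cnt strm)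
    {t : ℕ} (ht : ρ ≤ t) (ω : Ω) :
    |reservoirDeviation ρ cnt strm t ω| = t * |strm t ω / t - cnt t ω / ρ| := by
  have hρ : (ρ : ℝ) ≠ 0 := by exact_mod_cast hR.pos.ne'
  have ht₀ : (t : ℝ) ≠ 0 := by exact_mod_cast (hR.pos.trans_le ht).ne'
  rw [hR.reservoirDeviation_of_le ht,
    show (t : ℝ) / ρ * cnt t ω - strm t ω = -(t * (strm t ω / t - cnt t ω / ρ)) by
      field_simp; ring, abs_neg, abs_mul, abs_of_nonneg (Nat.cast_nonneg _)]

lemma reservoirDeviation_succ_sub (hR : IsReservoirSampling μ ℱ 𝒢 𝒢' ρ s ins rem cnt strm)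
    {n : ℕ} (hn : ρ ≤ n) :
    reservoirDeviation ρ cnt strm (n + 1) - reservoirDeviation ρ cnt strm n =
      reservoirIncrement (((n : ℝ) + 1) / ρ) (s (n + 1)) (fun ω => cnt n ω / ρ) (ins (n + 1))
        (rem (n + 1)) := by
  ext ω
  have hρ : (ρ : ℝ) ≠ 0 := by exact_mod_cast hR.pos.ne'
  have hcnt := hR.cnt_eq (n + 1) (by omega) ω
  have hstrm := hR.strm_eq (n + 1) (by omega) ω
  simp only [Nat.add_sub_cancel] at hcnt hstrm
  rw [Pi.sub_apply, hR.reservoirDeviation_of_le (by omega), hR.reservoirDeviation_of_le hn,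
    reservoirIncrement, hcnt, hstrm]
  push_cast
  field_simp
  ring

lemma isReservoirStep (hR : IsReservoirSampling μ ℱ 𝒢 𝒢' ρ s ins rem cnt strm) {n : ℕ}
    (hn : ρ ≤ n) :
    IsReservoirStep μ (𝒢 (n + 1)) (𝒢' (n + 1)) (((n : ℝ) + 1) / ρ) (s (n + 1))
      (fun ω => cnt n ω / ρ) (ins (n + 1)) (rem (n + 1)) := by
  obtain ⟨hℱ𝒢, h𝒢𝒢', h𝒢'ℱ⟩ := hR.le_chain (n + 1) (by omega)
  rw [Nat.add_sub_cancel] at hℱ𝒢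
  have hρ : (0 : ℝ) < ρ := by exact_mod_cast hR.pos
  refine ⟨h𝒢𝒢', h𝒢'ℱ.trans (ℱ.le _), hR.measurable_s _ (by omega),
    ((hR.measurable_cnt n).mono hℱ𝒢 le_rfl).div_const _, hR.measurable_ins _ (by omega),
    (hR.measurable_rem _ (by omega)).mono (ℱ.le _) le_rfl, hR.s_mem _,
    fun ω => ⟨div_nonneg (hR.cnt_mem n ω).1 hρ.le, div_le_one_of_le₀ (hR.cnt_mem n ω).2 hρ.le⟩,
    hR.ins_mem _, hR.rem_mem _, ?_, ?_⟩
  · filter_upwards [hR.condExp_ins (n + 1) (by omega)] with ω h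
    rw [h, inv_div]; push_cast; ring
  · filter_upwards [hR.condExp_rem (n + 1) (by omega)] with ω h
    rw [h, Nat.add_sub_cancel, Pi.mul_apply, mul_div_assoc]

lemma abs_reservoirDeviation_succ_sub_le
    (hR : IsReservoirSampling μ ℱ 𝒢 𝒢' ρ s ins rem cnt strm) (n : ℕ) (ω : Ω) :
    |reservoirDeviation ρ cnt strm (n + 1) ω - reservoirDeviation ρ cnt strm n ω| ≤
      ((n : ℝ) + 1) / ρ := by
  rcases lt_or_ge n ρ with hn | hn
  · rw [← Pi.sub_apply, reservoirDeviation_succ_sub_of_lt cnt strm hn, Pi.zero_apply, abs_zero]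
    positivity
  · have hS := hR.isReservoirStep hn
    rw [← Pi.sub_apply, hR.reservoirDeviation_succ_sub hn]
    have hρ : (0 : ℝ) < ρ := by exact_mod_cast hR.pos
    refine abs_reservoirIncrement_le ?_ (hS.s_mem ω) (hS.d_mem ω) (hS.ins_mem ω)
      (hS.rem_mem ω) (hR.rem_le_ins _ ω)
    rw [le_div_iff₀ hρ, one_mul]
    exact_mod_cast hn.trans n.le_succ

lemma measurable_strm (hR : IsReservoirSampling μ ℱ 𝒢 𝒢' ρ s ins rem cnt strm) {n : ℕ}
    (hn : ρ ≤ n) : Measurable[ℱ n] (strm n) := by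
  induction n, hn using Nat.le_induction with
  | base =>
    rw [show strm ρ = cnt ρ from funext fun ω => (hR.cnt_eq_strm ρ le_rfl ω).symm]
    exact hR.measurable_cnt ρ
  | succ n hn ih =>
    obtain ⟨-, h𝒢𝒢', h𝒢'ℱ⟩ := hR.le_chain (n + 1) (by omega)
    rw [show strm (n + 1) = strm n + s (n + 1) from
      funext fun ω => by simpa using hR.strm_eq (n + 1) (by omega) ω]
    exact (ih.mono (ℱ.mono n.le_succ) le_rfl).add
      ((hR.measurable_s _ (by omega)).mono (h𝒢𝒢'.trans h𝒢'ℱ) le_rfl)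

lemma stronglyAdapted_reservoirDeviation
    (hR : IsReservoirSampling μ ℱ 𝒢 𝒢' ρ s ins rem cnt strm) :
    StronglyAdapted ℱ (reservoirDeviation ρ cnt strm) := fun n => by
  rcases le_or_gt n ρ with hn | hn
  · rw [show reservoirDeviation ρ cnt strm n = 0 from funext fun ω => if_pos hn]
    exact stronglyMeasurable_const
  · rw [show reservoirDeviation ρ cnt strm n = fun ω => (n / ρ : ℝ) * cnt n ω - strm n ω from
      funext fun ω => if_neg hn.not_ge]
    have hcnt := hR.measurable_cnt n
    have hstrm := hR.measurable_strm hn.le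
    exact Measurable.stronglyMeasurable (by fun_prop)

lemma condExp_reservoirDeviation_succ_sub [IsFiniteMeasure μ]
    (hR : IsReservoirSampling μ ℱ 𝒢 𝒢' ρ s ins rem cnt strm) (n : ℕ) :
    μ[reservoirDeviation ρ cnt strm (n + 1) - reservoirDeviation ρ cnt strm n | ℱ n] =ᵐ[μ] 0 := by
  rcases lt_or_ge n ρ with hn | hn
  · rw [reservoirDeviation_succ_sub_of_lt cnt strm hn, condExp_zero]
  · have hS := hR.isReservoirStep hn
    have hℱ𝒢 : ℱ n ≤ 𝒢 (n + 1) := by simpa using (hR.le_chain (n + 1) (by omega)).1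
    rw [hR.reservoirDeviation_succ_sub hn]
    calc _ =ᵐ[μ] μ[μ[reservoirIncrement (((n : ℝ) + 1) / ρ) (s (n + 1)) (fun ω => cnt n ω / ρ)
          (ins (n + 1)) (rem (n + 1)) | 𝒢 (n + 1)] | ℱ n] :=
          (condExp_condExp_of_le hℱ𝒢 (hS.le.trans hS.le_ambient)).symm
      _ =ᵐ[μ] μ[0 | ℱ n] := condExp_congr_ae (hS.condExp_increment (hR.add_one_div_pos n).ne')
      _ = 0 := condExp_zero

lemma condExp_sq_reservoirDeviation_succ_sub_le [IsFiniteMeasure μ]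
    (hR : IsReservoirSampling μ ℱ 𝒢 𝒢' ρ s ins rem cnt strm) (n : ℕ) :
    μ[fun ω => (reservoirDeviation ρ cnt strm (n + 1) ω - reservoirDeviation ρ cnt strm n ω) ^ 2
      | ℱ n] ≤ᵐ[μ] fun _ => ((n : ℝ) + 1) / ρ := by
  rcases lt_or_ge n ρ with hn | hn
  · have h0 := congrFun (reservoirDeviation_succ_sub_of_lt cnt strm hn)
    simp only [Pi.sub_apply, Pi.zero_apply] at h0
    simp only [h0, zero_pow two_ne_zero]
    rw [← Pi.zero_def, condExp_zero]
    exact ae_of_all _ fun _ => by positivity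
  · have hS := hR.isReservoirStep hn
    have hℱ𝒢 : ℱ n ≤ 𝒢 (n + 1) := by simpa using (hR.le_chain (n + 1) (by omega)).1
    have h := congrFun (hR.reservoirDeviation_succ_sub hn)
    simp only [Pi.sub_apply] at h
    simp only [h]
    exact condExp_le_const_of_condExp_le_const hℱ𝒢 (hS.le.trans hS.le_ambient)
      (hS.condExp_increment_sq_le (hR.add_one_div_pos n))

lemma martingale_reservoirDeviation [IsFiniteMeasure μ]
    (hR : IsReservoirSampling μ ℱ 𝒢 𝒢' ρ s ins rem cnt strm) :
    Martingale (reservoirDeviation ρ cnt strm) ℱ μ := by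
  refine martingale_of_condExp_sub_eq_zero_nat hR.stronglyAdapted_reservoirDeviation (fun n => ?_)
    hR.condExp_reservoirDeviation_succ_sub
  exact .of_bound ((hR.stronglyAdapted_reservoirDeviation n).mono (ℱ.le n)).aestronglyMeasurable
    _ (ae_of_all _ fun ω =>
      abs_le_sum_of_abs_sub_le (f := (reservoirDeviation ρ cnt strm · ω))
        (congrFun (reservoirDeviation_zero ρ cnt strm) ω)
        (hR.abs_reservoirDeviation_succ_sub_le · ω) n)

end IsReservoirSampling

end Reservoir

theorem reservoir_sampling_martingale_and_concentration_general
    {Ω : Type*} {m0 : MeasurableSpace Ω} (μ : Measure Ω) [IsProbabilityMeasure μ]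
    (ℱ : Filtration ℕ m0) (𝒢 𝒢' : ℕ → MeasurableSpace Ω)
    (ρ T : ℕ) (hρ : 0 < ρ) (hρT : ρ < T)
    (s ins rem cnt strm : ℕ → Ω → ℝ) (Z : ℕ → Ω → ℝ)
    (horder : ∀ t, 1 ≤ t → ℱ (t - 1) ≤ 𝒢 t ∧ 𝒢 t ≤ 𝒢' t ∧ 𝒢' t ≤ ℱ t)
    (hsval : ∀ t ω, s t ω = 0 ∨ s t ω = 1)
    (hinsval : ∀ t ω, ins t ω = 0 ∨ ins t ω = 1)
    (hremval : ∀ t ω, rem t ω = 0 ∨ rem t ω = 1)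
    (hremins : ∀ t ω, rem t ω ≤ ins t ω)
    (hsmeas : ∀ t, 1 ≤ t → Measurable[𝒢 t] (s t))
    (hinsmeas : ∀ t, 1 ≤ t → Measurable[𝒢' t] (ins t))
    (hremmeas : ∀ t, 1 ≤ t → Measurable[ℱ t] (rem t))
    (hcnt_init : ∀ t, t ≤ ρ → ∀ ω, cnt t ω = strm t ω)
    (hcnt_rec : ∀ t, ρ < t → ∀ ω, cnt t ω = cnt (t - 1) ω + ins t ω * s t ω - rem t ω)
    (hcnt_bnd : ∀ t ω, 0 ≤ cnt t ω ∧ cnt t ω ≤ ρ)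
    (hcnt_adapted : ∀ t, Measurable[ℱ t] (cnt t))
    (hstrm_rec : ∀ t, 1 ≤ t → ∀ ω, strm t ω = strm (t - 1) ω + s t ω)
    (hins_cond : ∀ t, ρ < t → μ[ins t | 𝒢 t] =ᵐ[μ] fun _ => (ρ : ℝ) / t)
    (hrem_cond : ∀ t, ρ < t →
      μ[rem t | 𝒢' t] =ᵐ[μ] fun ω => ins t ω * cnt (t - 1) ω / ρ)
    (hZ : ∀ t ω, Z t ω = if t ≤ ρ then 0 else (t / ρ : ℝ) * cnt t ω - strm t ω)
    (δ ε : ℝ) (hδ : δ ∈ Set.Ioo (0:ℝ) 1) (hε : ε ∈ Set.Ioo (0:ℝ) 1) :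
    Martingale Z ℱ μ ∧
      (∀ t, ρ < t → ∀ᵐ ω ∂μ, |Z t ω - Z (t - 1) ω| ≤ (t : ℝ) / ρ) ∧
      (∀ t, ρ < t →
        ∀ᵐ ω ∂μ, (μ[fun ω => (Z t ω - Z (t - 1) ω) ^ 2 | ℱ (t - 1)]) ω ≤ (t : ℝ) / ρ) ∧
      ((2 / ε ^ 2) * Real.log (2 / δ) ≤ (ρ : ℝ) →
        μ {ω | ε ≤ |strm T ω / T - cnt T ω / ρ|} ≤ ENNReal.ofReal δ) := by
  have hR : IsReservoirSampling μ ℱ 𝒢 𝒢' ρ s ins rem cnt strm :=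
    ⟨hρ, horder, hsval, hinsval, hremval, hremins, hsmeas, hinsmeas, hremmeas, hcnt_init,
      hcnt_rec, hcnt_bnd, hcnt_adapted, hstrm_rec, hins_cond, hrem_cond⟩
  obtain rfl : Z = reservoirDeviation ρ cnt strm := funext fun t => funext (hZ t)
  refine ⟨hR.martingale_reservoirDeviation, fun t ht => ?_, fun t ht => ?_, fun hρε => ?_⟩
  · obtain ⟨n, rfl⟩ : ∃ n, t = n + 1 := ⟨t - 1, by omega⟩
    exact ae_of_all _ fun ω => by simpa using hR.abs_reservoirDeviation_succ_sub_le n ω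
  · obtain ⟨n, rfl⟩ : ∃ n, t = n + 1 := ⟨t - 1, by omega⟩
    have h := hR.condExp_sq_reservoirDeviation_succ_sub_le n
    simp only [Nat.add_sub_cancel, Nat.cast_add_one]
    exact h
  · have hT : (0 : ℝ) < T := by exact_mod_cast hρ.trans hρT
    have hevent : {ω | ε ≤ |strm T ω / T - cnt T ω / ρ|} ⊆
        {ω | ε * T ≤ |reservoirDeviation ρ cnt strm T ω|} := fun ω hω => by
      rw [Set.mem_ofPred_eq, hR.abs_reservoirDeviation_eq hρT.le, mul_comm ε]
      exact mul_le_mul_of_nonneg_left hω hT.le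
    calc _ ≤ _ := measure_mono hevent
      _ ≤ _ := measure_abs_ge_le_of_martingale hR.martingale_reservoirDeviation
          (reservoirDeviation_zero ρ cnt strm) hR.abs_reservoirDeviation_succ_sub_le
          hR.condExp_sq_reservoirDeviation_succ_sub_le (by have := hε.1; positivity) hε.2.le T
          (fun n hn => mul_div_mul_add_one_div_le hρ hn hε.1.le) (ε * T)
      _ ≤ _ := ENNReal.ofReal_le_ofReal
          (two_mul_exp_le_of_two_div_sq_mul_log_le hρT hδ hε hρε)

/-- Reservoir sampling of an adaptive stream: `Z_t = (t/ρ)|S∩reservoir_t| − |S∩C_t|`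
(`Z_t = 0` for `t ≤ ρ`) is a martingale with increments bounded by `t/ρ` and
conditional variance at most `t/ρ`; consequently, if `ρ ≥ (2/ε²)·ln(2/δ)` then the
density of `S` in the final reservoir is within `ε` of its density in the stream
with probability at least `1 − δ`.  Here `s t` is the indicator that the `t`-th
element lies in `S`, `ins t` the indicator that it enters the reservoir, `rem t`
the indicator that it enters and the element it replaces lies in `S`;
`cnt t = |S ∩ reservoir_t|`, `strm t = |S ∩ C_t|`. -/
theorem reservoir_sampling_martingale_and_concentration
    {Ω : Type*} {m0 : MeasurableSpace Ω} (μ : Measure Ω) [IsProbabilityMeasure μ]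
    (ℱ : Filtration ℕ m0) (𝒢 𝒢' : ℕ → MeasurableSpace Ω)
    (ρ T : ℕ) (hρ : 0 < ρ) (hρT : ρ < T)
    (s ins rem cnt strm : ℕ → Ω → ℝ) (Z : ℕ → Ω → ℝ)
    (horder : ∀ t, 1 ≤ t → ℱ (t - 1) ≤ 𝒢 t ∧ 𝒢 t ≤ 𝒢' t ∧ 𝒢' t ≤ ℱ t)
    (hsval : ∀ t ω, s t ω = 0 ∨ s t ω = 1)
    (hinsval : ∀ t ω, ins t ω = 0 ∨ ins t ω = 1)
    (hremval : ∀ t ω, rem t ω = 0 ∨ rem t ω = 1)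
    (hremins : ∀ t ω, rem t ω ≤ ins t ω)
    (hsmeas : ∀ t, 1 ≤ t → Measurable[𝒢 t] (s t))
    (hinsmeas : ∀ t, 1 ≤ t → Measurable[𝒢' t] (ins t))
    (hremmeas : ∀ t, 1 ≤ t → Measurable[ℱ t] (rem t))
    (hcnt_init : ∀ t, t ≤ ρ → ∀ ω, cnt t ω = strm t ω)
    (hcnt_rec : ∀ t, ρ < t → ∀ ω, cnt t ω = cnt (t - 1) ω + ins t ω * s t ω - rem t ω)
    (hcnt_bnd : ∀ t ω, 0 ≤ cnt t ω ∧ cnt t ω ≤ ρ)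
    (hcnt_adapted : ∀ t, Measurable[ℱ t] (cnt t))
    (hstrm0 : ∀ ω, strm 0 ω = 0)
    (hstrm_rec : ∀ t, 1 ≤ t → ∀ ω, strm t ω = strm (t - 1) ω + s t ω)
    (hins_cond : ∀ t, ρ < t → μ[ins t | 𝒢 t] =ᵐ[μ] fun _ => (ρ : ℝ) / t)
    (hrem_cond : ∀ t, ρ < t →
      μ[rem t | 𝒢' t] =ᵐ[μ] fun ω => ins t ω * cnt (t - 1) ω / ρ)
    (hZ : ∀ t ω, Z t ω = if t ≤ ρ then 0 else (t / ρ : ℝ) * cnt t ω - strm t ω)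
    (δ ε : ℝ) (hδ : δ ∈ Set.Ioo (0:ℝ) 1) (hε : ε ∈ Set.Ioo (0:ℝ) 1) :
    Martingale Z ℱ μ ∧
      (∀ t, ρ < t → ∀ᵐ ω ∂μ, |Z t ω - Z (t - 1) ω| ≤ (t : ℝ) / ρ) ∧
      (∀ t, ρ < t →
        ∀ᵐ ω ∂μ, (μ[fun ω => (Z t ω - Z (t - 1) ω) ^ 2 | ℱ (t - 1)]) ω ≤ (t : ℝ) / ρ) ∧
      ((2 / ε ^ 2) * Real.log (2 / δ) ≤ (ρ : ℝ) →
        μ {ω | ε ≤ |strm T ω / T - cnt T ω / ρ|} ≤ ENNReal.ofReal δ) :=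
  reservoir_sampling_martingale_and_concentration_general μ ℱ 𝒢 𝒢' ρ T hρ hρT s ins rem cnt strm Z
    horder hsval hinsval hremval hremins hsmeas hinsmeas hremmeas hcnt_init hcnt_rec hcnt_bnd
    hcnt_adapted hstrm_rec hins_cond hrem_cond hZ δ ε hδ hε
end

section
/- Given v ∈ ℝⁿ, the Euclidean projection of v onto the probability simplex Δ = {θ ∈ ℝⁿ : θ ≥ 0, ∑θᵢ = 1} is given by θᵢ = max(vᵢ − η, 0), where η = (∑_{r=1}^ρ ψ_r − 1)/ρ, ψ is the vector v sorted in nonincreasing order, and ρ = max{ j ∈ [n] : ψ_j − (1/j)(∑_{r=1}^j ψ_r − 1) > 0 }. -/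
/-!
Writing `p = max (v - η) 0`, the projection is characterised by the variational inequality
`⟪v - p, θ - p⟫ ≤ 0` on the simplex; coordinatewise `(v - p)(θ - p) ≤ η (θ - p)` for `θ ≥ 0`,
so any `η` with `∑ p = 1` works. For the sorted vector `ψ` the threshold `η` separates
`ψ_0, …, ψ_ρ` (all `> η` by the choice of `ρ`) from the rest (all `≤ η`, since the criterion
fails at `ρ + 1`), and then `∑ p = ∑_{r ≤ ρ} ψ_r - (ρ + 1) η = 1`.
-/

open Finset

lemma sq_sub_max_sub_sub_le {v θ : ℝ} (η : ℝ) (hθ : 0 ≤ θ) :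
    (v - max (v - η) 0) ^ 2 - 2 * η * (θ - max (v - η) 0) ≤ (v - θ) ^ 2 := by
  rcases le_total 0 (v - η) with h | h
  · rw [max_eq_left h]
    nlinarith [sq_nonneg (v - θ - η)]
  · rw [max_eq_right h]
    nlinarith

lemma max_sub_mem_stdSimplex {ι : Type*} [Fintype ι] {v : ι → ℝ} {η : ℝ}
    (hsum : ∑ i, max (v i - η) 0 = 1) :
    (fun i => max (v i - η) 0) ∈ stdSimplex ℝ ι :=
  ⟨fun _ => le_max_right _ _, hsum⟩

lemma sum_sq_sub_max_sub_le {ι : Type*} [Fintype ι] {v : ι → ℝ} {η : ℝ}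
    (hsum : ∑ i, max (v i - η) 0 = 1) {θ : ι → ℝ} (hθ : θ ∈ stdSimplex ℝ ι) :
    ∑ i, (v i - max (v i - η) 0) ^ 2 ≤ ∑ i, (v i - θ i) ^ 2 :=
  calc ∑ i, (v i - max (v i - η) 0) ^ 2
      = ∑ i, ((v i - max (v i - η) 0) ^ 2 - 2 * η * (θ i - max (v i - η) 0)) := by
        rw [sum_sub_distrib, ← mul_sum, sum_sub_distrib, hθ.2, hsum]
        ring
    _ ≤ ∑ i, (v i - θ i) ^ 2 := sum_le_sum fun i _ => sq_sub_max_sub_sub_le η (hθ.1 i)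

lemma sum_max_sub_eq_of_threshold {ι : Type*} [Fintype ι] (s : Finset ι) {f : ι → ℝ} {η : ℝ}
    (hs : ∀ i ∈ s, η ≤ f i) (hsc : ∀ i ∉ s, f i ≤ η) :
    ∑ i, max (f i - η) 0 = ∑ i ∈ s, f i - #s * η := by
  classical
  have hpos : ∀ i, max (f i - η) 0 = if i ∈ s then f i - η else 0 := fun i => by
    split_ifs with hi
    · exact max_eq_left (sub_nonneg.2 (hs i hi))
    · exact max_eq_right (sub_nonpos.2 (hsc i hi))
  simp only [hpos, sum_ite_mem, univ_inter, sum_sub_distrib, sum_const, nsmul_eq_mul]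

lemma le_threshold_of_cutoff_lt {n : ℕ} {ψ : Fin n → ℝ} (hψ : Antitone ψ) {ρ j : Fin n}
    (hρj : ρ < j) {η : ℝ} (hη : ∑ r ∈ Iic ρ, ψ r - 1 = ((ρ : ℕ) + 1) * η)
    (hnext : ∀ k : Fin n, (k : ℕ) = ρ + 1 → ψ k ≤ (∑ r ∈ Iic k, ψ r - 1) / ((k : ℕ) + 1)) :
    ψ j ≤ η := by
  have hk : (ρ : ℕ) + 1 < n := by have := Fin.lt_def.1 hρj; omega
  set k : Fin n := ⟨ρ + 1, hk⟩
  have hIic : Iic k = insert k (Iic ρ) := by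
    ext r
    simp only [mem_Iic, mem_insert, Fin.le_def, Fin.ext_iff, k]
    omega
  have hψk := hnext k rfl
  rw [hIic, sum_insert (by simp [k, Fin.le_def]), le_div_iff₀ (by positivity)] at hψk
  have hψk_le : ψ k ≤ η := by
    simp only [k] at hψk
    push_cast at hψk
    nlinarith
  exact (hψ (Fin.lt_def.1 hρj : k ≤ j)).trans hψk_le

theorem simplex_projection_formula_general
    {n : ℕ} (v ψ : Fin n → ℝ) (σ : Equiv.Perm (Fin n))
    (hψ : ∀ i, ψ i = v (σ i))
    (hsort : ∀ i j : Fin n, i ≤ j → ψ j ≤ ψ i)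
    (ρ : Fin n)
    (hρmem : 0 < ψ ρ -
      (1 / ((ρ : ℕ) + 1 : ℝ)) * ((∑ r ∈ Finset.univ.filter (fun r => r ≤ ρ), ψ r) - 1))
    (hρmax : ∀ j : Fin n,
      0 < ψ j -
          (1 / ((j : ℕ) + 1 : ℝ)) * ((∑ r ∈ Finset.univ.filter (fun r => r ≤ j), ψ r) - 1) →
        j ≤ ρ)
    (η : ℝ)
    (hη : η = ((∑ r ∈ Finset.univ.filter (fun r => r ≤ ρ), ψ r) - 1) / ((ρ : ℕ) + 1 : ℝ)) :
    (fun i => max (v i - η) 0) ∈ stdSimplex ℝ (Fin n) ∧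
      ∀ θ ∈ stdSimplex ℝ (Fin n),
        ∑ i, (v i - max (v i - η) 0) ^ 2 ≤ ∑ i, (v i - θ i) ^ 2 := by
  simp only [filter_ge_eq_Iic, one_div_mul_eq_div] at hρmem hρmax hη
  have hρη : ∑ r ∈ Iic ρ, ψ r - 1 = ((ρ : ℕ) + 1) * η := by
    rw [hη]
    field_simp
  have hηψ : η < ψ ρ := by rwa [← hη, sub_pos] at hρmem
  have hψη : ∀ j, ρ < j → ψ j ≤ η := fun j hρj =>
    le_threshold_of_cutoff_lt hsort hρj hρη fun k hk => by
      have hkρ : ¬k ≤ ρ := by rw [Fin.le_def]; omega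
      simpa using mt (hρmax k) hkρ
  have hsum : ∑ i, max (v i - η) 0 = 1 := by
    rw [← Equiv.sum_comp σ]
    simp only [← hψ]
    rw [sum_max_sub_eq_of_threshold (Iic ρ)
        (fun i hi => hηψ.le.trans (hsort i ρ (mem_Iic.1 hi)))
        (fun i hi => hψη i (not_le.1 (mt mem_Iic.2 hi))), Fin.card_Iic]
    push_cast
    linarith
  exact ⟨max_sub_mem_stdSimplex hsum, fun θ hθ => sum_sq_sub_max_sub_le hsum hθ⟩

/-- Euclidean projection onto the probability simplex: with `ψ` the nonincreasing
rearrangement of `v`, `ρ` the largest index `j` with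
`ψ_j − (1/j)(∑_{r≤j} ψ_r − 1) > 0`, and `η = (∑_{r≤ρ} ψ_r − 1)/ρ`, the vector
`θᵢ = max(vᵢ − η, 0)` lies in the simplex and minimizes the squared Euclidean
distance to `v` over the simplex. -/
theorem simplex_projection_formula
    {n : ℕ} (hn : 0 < n) (v ψ : Fin n → ℝ) (σ : Equiv.Perm (Fin n))
    (hψ : ∀ i, ψ i = v (σ i))
    (hsort : ∀ i j : Fin n, i ≤ j → ψ j ≤ ψ i)
    (ρ : Fin n)
    (hρmem : 0 < ψ ρ -
      (1 / ((ρ : ℕ) + 1 : ℝ)) * ((∑ r ∈ Finset.univ.filter (fun r => r ≤ ρ), ψ r) - 1))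
    (hρmax : ∀ j : Fin n,
      0 < ψ j -
          (1 / ((j : ℕ) + 1 : ℝ)) * ((∑ r ∈ Finset.univ.filter (fun r => r ≤ j), ψ r) - 1) →
        j ≤ ρ)
    (η : ℝ)
    (hη : η = ((∑ r ∈ Finset.univ.filter (fun r => r ≤ ρ), ψ r) - 1) / ((ρ : ℕ) + 1 : ℝ)) :
    (fun i => max (v i - η) 0) ∈ stdSimplex ℝ (Fin n) ∧
      ∀ θ ∈ stdSimplex ℝ (Fin n),
        ∑ i, (v i - max (v i - η) 0) ^ 2 ≤ ∑ i, (v i - θ i) ^ 2 :=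
  simplex_projection_formula_general v ψ σ hψ hsort ρ hρmem hρmax η hη
end
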